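/- arXiv:2311.13943 — 3 statements merged into one kernel-verified Lean document; each statement's English description precedes it below -/
import Mathlib

section
/- If G is a forest with n vertices, then PS(G) ≤ PS(P_n) = F(n+1), with equality if and only if G is isomorphic to the path P_n. -/
open SimpleGraph Finset
open scoped Classical

noncomputable section

namespace PermSum

variable {V W : Type*}

/-- Number of cycle components of the spanning subgraph with edge set `M`:
components all of whose vertices have degree `2`. -/
noncomputable def numCycles [Fintype V] (M : Finset (Sym2 V)) : ℕ :=
  Nat.card {c : (fromEdgeSet (↑M : Set (Sym2 V))).ConnectedComponent //
    ∀ v, (fromEdgeSet (↑M : Set (Sym2 V))).connectedComponentMk v = c →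
      (fromEdgeSet (↑M : Set (Sym2 V))).degree v = 2}

/-- `M` is the edge set of a Sachs subgraph of `G`: each component of the graph it spans is a
single edge or a cycle (every covered vertex has degree 1 or 2, and any vertex of degree 1 has
its neighbours of degree 1). -/
def IsSachs [Fintype V] (G : SimpleGraph V) (M : Finset (Sym2 V)) : Prop :=
  (↑M : Set (Sym2 V)) ⊆ G.edgeSet ∧
  (∀ v ∈ (fromEdgeSet (↑M : Set (Sym2 V))).support,
      (fromEdgeSet (↑M : Set (Sym2 V))).degree v = 1 ∨
      (fromEdgeSet (↑M : Set (Sym2 V))).degree v = 2) ∧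
  (∀ v w, (fromEdgeSet (↑M : Set (Sym2 V))).Adj v w →
      (fromEdgeSet (↑M : Set (Sym2 V))).degree v = 1 →
      (fromEdgeSet (↑M : Set (Sym2 V))).degree w = 1)

/-- The permanental sum of a finite simple graph: `∑_H 2^{c(H)}` over all Sachs subgraphs `H`
(including the empty one). -/
noncomputable def PS [Fintype V] (G : SimpleGraph V) : ℕ :=
  ∑ M ∈ Finset.univ.filter (fun M : Finset (Sym2 V) => IsSachs G M), 2 ^ numCycles M

lemma acyclic_mono {G H : SimpleGraph V} (hle : H ≤ G) (hG : G.IsAcyclic) : H.IsAcyclic :=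
  fun _ c hc => hG (c.mapLe hle) (hc.mapLe hle)

def Matchy (G : SimpleGraph V) (M : Finset (Sym2 V)) : Prop :=
  (↑M : Set (Sym2 V)) ⊆ G.edgeSet ∧
  ∀ e ∈ M, ∀ f ∈ M, e ≠ f → ∀ x, x ∈ e → x ∉ f

noncomputable def mcount [Fintype V] (G : SimpleGraph V) : ℕ :=
  (univ.filter fun M : Finset (Sym2 V) => Matchy G M).card

lemma exists_leaf [Fintype V] {H : SimpleGraph V} (hH : H.IsAcyclic) {v : V}
    (hv : 0 < H.degree v) : ∃ w, H.Reachable v w ∧ H.degree w = 1 := by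
  classical
  set P : ℕ → Prop := fun L => ∃ (x : V) (q : H.Walk v x), q.IsPath ∧ q.length = L with hP
  have hmax : ∀ (x : V) (q : H.Walk v x), q.IsPath → q.length ≤ Nat.findGreatest P (Fintype.card V) := by
    intro x q hq
    exact Nat.le_findGreatest (le_of_lt hq.length_lt) ⟨x, q, hq, rfl⟩
  obtain ⟨u₀, hu₀⟩ := (H.degree_pos_iff_exists_adj v).1 hv
  have hP1 : P 1 := by
    refine ⟨u₀, Walk.cons hu₀ Walk.nil, ?_, rfl⟩
    simp [Walk.cons_isPath_iff, hu₀.ne]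
  have h1card : 1 ≤ Fintype.card V := Fintype.card_pos_iff.2 ⟨v⟩
  have hPL : P (Nat.findGreatest P (Fintype.card V)) := Nat.findGreatest_spec h1card hP1
  have hL1 : 1 ≤ Nat.findGreatest P (Fintype.card V) := Nat.le_findGreatest h1card hP1
  obtain ⟨w, p, hp, hlen⟩ := hPL
  refine ⟨w, p.reachable, ?_⟩
  have hrp : p.reverse.IsPath := hp.reverse
  have hrnil : ¬ p.reverse.Nil := by
    rw [Walk.not_nil_iff_lt_length, Walk.length_reverse, hlen]; omega
  obtain ⟨y, h₀, q, hq⟩ := Walk.not_nil_iff.1 hrnil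
  have hsub : H.neighborFinset w ⊆ {y} := by
    intro x hx
    rw [SimpleGraph.mem_neighborFinset] at hx
    simp only [Finset.mem_singleton]
    by_cases hxs : x ∈ p.reverse.support
    · -- cycle or x = y
      have ht : (p.reverse.takeUntil x hxs).IsPath := hrp.takeUntil hxs
      by_cases he : s(x, w) ∈ (p.reverse.takeUntil x hxs).edges
      · have he' : s(x, w) ∈ p.reverse.edges := Walk.edges_takeUntil_subset _ hxs he
        rw [hq] at he'
        simp only [Walk.edges_cons, List.mem_cons] at he'
        rcases he' with he' | he'
        · rw [Sym2.eq_iff] at he'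
          rcases he' with ⟨rfl, rfl⟩ | ⟨rfl, -⟩
          · exact absurd rfl hx.ne'
          · rfl
        · exfalso
          have hws : w ∈ q.support := Walk.snd_mem_support_of_mem_edges q he'
          rw [hq] at hrp
          rw [Walk.cons_isPath_iff] at hrp
          exact hrp.2 hws
      · exfalso
        have hc : (Walk.cons hx.symm (p.reverse.takeUntil x hxs)).IsCycle := by
          rw [Walk.cons_isCycle_iff]
          exact ⟨ht, he⟩
        exact hH _ hc
    · exfalso
      have hext : (Walk.cons hx.symm p.reverse).IsPath := by
        rw [Walk.cons_isPath_iff]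
        exact ⟨hrp, hxs⟩
      have := hmax x (Walk.cons hx.symm p.reverse).reverse hext.reverse
      rw [Walk.length_reverse, Walk.length_cons, Walk.length_reverse, hlen] at this
      omega
  have hy : y ∈ H.neighborFinset w := by
    rw [SimpleGraph.mem_neighborFinset]; exact h₀
  have : H.neighborFinset w = {y} :=
    Finset.Subset.antisymm hsub (Finset.singleton_subset_iff.2 hy)
  rw [← SimpleGraph.card_neighborFinset_eq_degree, this, Finset.card_singleton]


section sachs
variable [Fintype V] {G : SimpleGraph V} {M : Finset (Sym2 V)}

lemma fromEdgeSet_le (h : (↑M : Set (Sym2 V)) ⊆ G.edgeSet) :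
    fromEdgeSet (↑M : Set (Sym2 V)) ≤ G := by
  calc fromEdgeSet (↑M : Set (Sym2 V)) ≤ fromEdgeSet G.edgeSet := fromEdgeSet_mono h
  _ = G := fromEdgeSet_edgeSet G

lemma sachs_deg_le_one (hG : G.IsAcyclic) (hS : IsSachs G M) (v : V) :
    (fromEdgeSet (↑M : Set (Sym2 V))).degree v ≤ 1 := by
  have hHac : (fromEdgeSet (↑M : Set (Sym2 V))).IsAcyclic := acyclic_mono (fromEdgeSet_le hS.1) hG
  by_contra h
  push_neg at h
  have hv2 : (fromEdgeSet (↑M : Set (Sym2 V))).degree v = 2 := by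
    have hvsup : v ∈ (fromEdgeSet (↑M : Set (Sym2 V))).support := by
      obtain ⟨w, hw⟩ := ((fromEdgeSet (↑M : Set (Sym2 V))).degree_pos_iff_exists_adj v).1 (by omega)
      exact (SimpleGraph.mem_support _).2 ⟨w, hw⟩
    rcases hS.2.1 v hvsup with h1 | h2
    · omega
    · exact h2
  have step : ∀ a b : V, (fromEdgeSet (↑M : Set (Sym2 V))).degree a = 2 →
      (fromEdgeSet (↑M : Set (Sym2 V))).Adj a b → (fromEdgeSet (↑M : Set (Sym2 V))).degree b = 2 := by
    intro a b ha hab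
    have hbsup : b ∈ (fromEdgeSet (↑M : Set (Sym2 V))).support := (SimpleGraph.mem_support _).2 ⟨a, hab.symm⟩
    rcases hS.2.1 b hbsup with h1 | h2
    · have := hS.2.2 b a hab.symm h1
      omega
    · exact h2
  have walkdeg : ∀ (a b : V), (fromEdgeSet (↑M : Set (Sym2 V))).Walk a b →
      (fromEdgeSet (↑M : Set (Sym2 V))).degree a = 2 → (fromEdgeSet (↑M : Set (Sym2 V))).degree b = 2 := by
    intro a b p
    induction p with
    | nil => exact id
    | cons h q ih => intro ha; exact ih (step _ _ ha h)
  obtain ⟨w, hreach, hw1⟩ := exists_leaf hHac (v := v) (by convert (show 0 < (fromEdgeSet (↑M : Set (Sym2 V))).degree v by omega) using 2)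
  obtain ⟨p⟩ := hreach
  have := walkdeg _ _ p hv2
  have hw1' : (fromEdgeSet (↑M : Set (Sym2 V))).degree w = 1 := by convert hw1 using 2
  omega

lemma matchy_deg_le_one (hM : Matchy G M) (v : V) :
    (fromEdgeSet (↑M : Set (Sym2 V))).degree v ≤ 1 := by
  by_contra h
  push_neg at h
  obtain ⟨w, hw⟩ := ((fromEdgeSet (↑M : Set (Sym2 V))).degree_pos_iff_exists_adj v).1 (by omega)
  have huniq : ∀ w' : V, (fromEdgeSet (↑M : Set (Sym2 V))).Adj v w' → w' = w := by
    intro w' hw'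
    rw [fromEdgeSet_adj] at hw hw'
    by_contra hne
    have hef : s(v, w') ≠ s(v, w) := by
      intro hcontra
      rw [Sym2.eq_iff] at hcontra
      rcases hcontra with ⟨-, h2⟩ | ⟨h1, h2⟩
      · exact hne h2
      · exact hw'.2 h2.symm
    exact hM.2 _ hw'.1 _ hw.1 hef v (by simp) (by simp)
  have : (fromEdgeSet (↑M : Set (Sym2 V))).neighborFinset v ⊆ {w} := by
    intro x hx
    rw [SimpleGraph.mem_neighborFinset] at hx
    rw [Finset.mem_singleton]
    exact huniq x hx
  have := Finset.card_le_card this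
  rw [Finset.card_singleton, SimpleGraph.card_neighborFinset_eq_degree] at this
  omega

lemma isSachs_iff_matchy (hG : G.IsAcyclic) : IsSachs G M ↔ Matchy G M := by
  constructor
  · intro hS
    refine ⟨hS.1, ?_⟩
    intro e he f hf hef x hx hxf
    obtain ⟨a, rfl⟩ := Sym2.mem_iff_exists.1 hx
    obtain ⟨b, rfl⟩ := Sym2.mem_iff_exists.1 hxf
    have hxa : x ≠ a := fun h => by
      apply G.not_isDiag_of_mem_edgeSet (hS.1 he); rw [← h]; exact Sym2.isDiag_iff_proj_eq |>.2 rfl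
    have hxb : x ≠ b := fun h => by
      apply G.not_isDiag_of_mem_edgeSet (hS.1 hf); rw [← h]; exact Sym2.isDiag_iff_proj_eq |>.2 rfl
    have hab : a ≠ b := fun h => hef (by rw [h])
    have ha : (fromEdgeSet (↑M : Set (Sym2 V))).Adj x a := by rw [fromEdgeSet_adj]; exact ⟨he, hxa⟩
    have hb : (fromEdgeSet (↑M : Set (Sym2 V))).Adj x b := by rw [fromEdgeSet_adj]; exact ⟨hf, hxb⟩
    have hsub : {a, b} ⊆ (fromEdgeSet (↑M : Set (Sym2 V))).neighborFinset x := by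
      intro y hy
      rw [SimpleGraph.mem_neighborFinset]
      rcases Finset.mem_insert.1 hy with rfl | hy
      · exact ha
      · rw [Finset.mem_singleton] at hy; subst hy; exact hb
    have h2 : 2 ≤ (fromEdgeSet (↑M : Set (Sym2 V))).degree x := by
      rw [← SimpleGraph.card_neighborFinset_eq_degree]
      calc 2 = ({a, b} : Finset V).card := (Finset.card_pair hab).symm
      _ ≤ _ := Finset.card_le_card hsub
    have := sachs_deg_le_one hG ⟨hS.1, hS.2.1, hS.2.2⟩ x
    omega
  · intro hM
    refine ⟨hM.1, ?_, ?_⟩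
    · intro v hv
      left
      obtain ⟨w, hw⟩ := (SimpleGraph.mem_support _).1 hv
      have h1 : 0 < (fromEdgeSet (↑M : Set (Sym2 V))).degree v :=
        (SimpleGraph.degree_pos_iff_exists_adj _ _).2 ⟨w, hw⟩
      have := matchy_deg_le_one hM v
      omega
    · intro v w hadj _
      have h1 : 0 < (fromEdgeSet (↑M : Set (Sym2 V))).degree w :=
        (SimpleGraph.degree_pos_iff_exists_adj _ _).2 ⟨v, hadj.symm⟩
      have := matchy_deg_le_one hM w
      omega

lemma numCycles_eq_zero (hM : Matchy G M) : numCycles M = 0 := by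
  rw [numCycles, Nat.card_eq_zero]
  left
  rw [isEmpty_iff]
  rintro ⟨c, hc⟩
  obtain ⟨v, rfl⟩ := c.exists_rep
  have := hc v rfl
  have := matchy_deg_le_one hM v
  omega

end sachs


lemma matchy_induce_iff (G : SimpleGraph V) (s : Set V) (M' : Finset (Sym2 s)) :
    Matchy (G.induce s) M' ↔ Matchy G (M'.image (Sym2.map Subtype.val)) := by
  have hinj : Function.Injective (Sym2.map (Subtype.val : s → V)) :=
    Sym2.map.injective Subtype.val_injective
  constructor
  · rintro ⟨hsub, hdisj⟩
    constructor
    · intro e he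
      simp only [coe_image, Set.mem_image, mem_coe] at he
      obtain ⟨e', he', rfl⟩ := he
      have := hsub he'
      induction e' with
      | _ a b =>
        simp only [SimpleGraph.mem_edgeSet] at this ⊢
        simpa using this
    · intro e he f hf hef x hx hxf
      simp only [mem_image] at he hf
      obtain ⟨e', he', rfl⟩ := he
      obtain ⟨f', hf', rfl⟩ := hf
      rw [Sym2.mem_map] at hx hxf
      obtain ⟨a, ha, rfl⟩ := hx
      obtain ⟨b, hb, hba⟩ := hxf
      have hab : b = a := Subtype.val_injective hba
      subst hab
      exact hdisj e' he' f' hf' (fun h => hef (by rw [h])) b ha hb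
  · rintro ⟨hsub, hdisj⟩
    constructor
    · intro e he
      have : Sym2.map Subtype.val e ∈ G.edgeSet := hsub (by simpa using Finset.mem_image_of_mem _ he)
      induction e with
      | _ a b => simpa using this
    · intro e he f hf hef x hx hxf
      have he' : Sym2.map Subtype.val e ∈ M'.image (Sym2.map Subtype.val) :=
        Finset.mem_image_of_mem _ he
      have hf' : Sym2.map Subtype.val f ∈ M'.image (Sym2.map Subtype.val) :=
        Finset.mem_image_of_mem _ hf
      refine hdisj _ he' _ hf' (fun h => hef (hinj h)) x.val ?_ ?_
      · exact Sym2.mem_map.2 ⟨x, hx, rfl⟩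
      · exact Sym2.mem_map.2 ⟨x, hxf, rfl⟩



lemma exists_lift (p : V → Prop) (e : Sym2 V) (h : ∀ x ∈ e, p x) :
    ∃ e' : Sym2 {x // p x}, Sym2.map Subtype.val e' = e := by
  induction e with
  | _ x y => exact ⟨s(⟨x, h x (by simp)⟩, ⟨y, h y (by simp)⟩), by simp⟩

lemma matchy_subset {G : SimpleGraph V} {M N : Finset (Sym2 V)} (h : N ⊆ M)
    (hM : Matchy G M) : Matchy G N :=
  ⟨Set.Subset.trans (Finset.coe_subset.2 h) hM.1,
   fun e he f hf hef x hx hxf => hM.2 e (h he) f (h hf) hef x hx hxf⟩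

lemma exists_preimage (s : Set V) (M : Finset (Sym2 V)) (h : ∀ e ∈ M, ∀ x ∈ e, x ∈ s) :
    ∃ M' : Finset (Sym2 s), M'.image (Sym2.map Subtype.val) = M := by
  refine ⟨M.attach.image (fun e => Classical.choose (exists_lift (· ∈ s) e.1 (h e.1 e.2))), ?_⟩
  ext e
  simp only [Finset.mem_image, Finset.mem_attach, true_and, Subtype.exists]
  constructor
  · rintro ⟨e', ⟨f, hf, rfl⟩, rfl⟩
    rw [Classical.choose_spec (exists_lift (· ∈ s) f (h f hf))]
    exact hf
  · intro he
    exact ⟨_, ⟨e, he, rfl⟩, Classical.choose_spec (exists_lift (· ∈ s) e (h e he))⟩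

lemma sym2_map_val_injective {s : Set V} :
    Function.Injective (Sym2.map (Subtype.val : s → V)) :=
  Sym2.map.injective Subtype.val_injective

lemma mem_image_val_avoid {s : Set V} (M' : Finset (Sym2 s)) {e : Sym2 V}
    (he : e ∈ M'.image (Sym2.map Subtype.val)) {x : V} (hx : x ∈ e) : x ∈ s := by
  rw [Finset.mem_image] at he
  obtain ⟨e', _, rfl⟩ := he
  rw [Sym2.mem_map] at hx
  obtain ⟨a, _, rfl⟩ := hx
  exact a.2

/-- If all edges of `G` live inside `s`, matchings counts agree with the induced graph. -/
lemma mcount_induce_of_edges [Fintype V] {G : SimpleGraph V} (s : Set V)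
    (h : ∀ e ∈ G.edgeSet, ∀ x ∈ e, x ∈ s) : mcount G = mcount (G.induce s) := by
  rw [mcount, mcount]
  refine (Finset.card_bij (fun M' _ => M'.image (Sym2.map Subtype.val)) ?_ ?_ ?_).symm
  · intro M' hM'
    rw [Finset.mem_filter] at hM' ⊢
    exact ⟨Finset.mem_univ _, (matchy_induce_iff G s M').1 hM'.2⟩
  · intro M₁ h₁ M₂ h₂ heq
    exact Finset.image_injective sym2_map_val_injective heq
  · intro M hM
    rw [Finset.mem_filter] at hM
    obtain ⟨M', hM'⟩ := exists_preimage s M (fun e he => h e (hM.2.1 he))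
    refine ⟨M', Finset.mem_filter.2 ⟨Finset.mem_univ _, ?_⟩, hM'⟩
    rw [matchy_induce_iff, hM']
    exact hM.2

/-- Leaf recurrence. -/
lemma mcount_leaf [Fintype V] {G : SimpleGraph V} {v u : V} (hadj : G.Adj v u)
    (hdeg : G.degree v = 1) :
    mcount G = mcount (G.induce ({v}ᶜ : Set V)) + mcount (G.induce ({v, u}ᶜ : Set V)) := by
  classical
  have huniq : ∀ a : V, G.Adj v a → a = u := by
    intro a ha
    have h1 : (G.neighborFinset v).card ≤ 1 := by
      rw [SimpleGraph.card_neighborFinset_eq_degree, hdeg]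
    exact Finset.card_le_one.1 h1 a ((SimpleGraph.mem_neighborFinset G v a).2 ha) u
      ((SimpleGraph.mem_neighborFinset G v u).2 hadj)
  have hsplit : mcount G =
      ((univ.filter fun M : Finset (Sym2 V) => Matchy G M ∧ s(v,u) ∉ M)).card
      + ((univ.filter fun M : Finset (Sym2 V) => Matchy G M ∧ s(v,u) ∈ M)).card := by
    rw [mcount, ← Finset.filter_filter, ← Finset.filter_filter, Nat.add_comm]
    exact (Finset.card_filter_add_card_filter_not
      (s := univ.filter fun M : Finset (Sym2 V) => Matchy G M)
      (p := fun M => s(v,u) ∈ M)).symm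
  rw [hsplit]
  congr 1
  · -- uncovered part
    rw [mcount]
    refine (Finset.card_bij (fun M' _ => M'.image (Sym2.map Subtype.val)) ?_ ?_ ?_).symm
    · intro M' hM'
      rw [Finset.mem_filter] at hM' ⊢
      refine ⟨Finset.mem_univ _, (matchy_induce_iff G _ M').1 hM'.2, ?_⟩
      intro hmem
      have : v ∈ ({v}ᶜ : Set V) := mem_image_val_avoid M' hmem (by simp)
      simp at this
    · intro M₁ h₁ M₂ h₂ heq
      exact Finset.image_injective sym2_map_val_injective heq
    · intro M hM
      rw [Finset.mem_filter] at hM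
      obtain ⟨hMm, hMe⟩ := hM.2
      have havoid : ∀ e ∈ M, ∀ x ∈ e, x ∈ ({v}ᶜ : Set V) := by
        intro e he x hx
        simp only [Set.mem_compl_iff, Set.mem_singleton_iff]
        rintro rfl
        obtain ⟨a, rfl⟩ := Sym2.mem_iff_exists.1 hx
        have hGa : G.Adj x a := (SimpleGraph.mem_edgeSet G).1 (hMm.1 he)
        have := huniq a hGa
        subst this
        exact hMe he
      obtain ⟨M', hM'⟩ := exists_preimage _ M havoid
      refine ⟨M', Finset.mem_filter.2 ⟨Finset.mem_univ _, ?_⟩, hM'⟩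
      rw [matchy_induce_iff, hM']
      exact hMm
  · -- covered part
    rw [mcount]
    refine (Finset.card_bij (fun M' _ => insert s(v,u) (M'.image (Sym2.map Subtype.val))) ?_ ?_ ?_).symm
    · intro M' hM'
      rw [Finset.mem_filter] at hM' ⊢
      have hMm : Matchy G (M'.image (Sym2.map Subtype.val)) := (matchy_induce_iff G _ M').1 hM'.2
      have havoid : ∀ e ∈ M'.image (Sym2.map Subtype.val), ∀ x ∈ e, x ≠ v ∧ x ≠ u := by
        intro e he x hx
        have := mem_image_val_avoid M' he hx
        simp only [Set.mem_compl_iff, Set.mem_insert_iff, Set.mem_singleton_iff] at this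
        push_neg at this
        exact this
      refine ⟨Finset.mem_univ _, ⟨?_, ?_⟩, Finset.mem_insert_self _ _⟩
      · intro e he
        rw [Finset.coe_insert, Set.mem_insert_iff] at he
        rcases he with rfl | he
        · exact (SimpleGraph.mem_edgeSet G).2 hadj
        · exact hMm.1 he
      · intro e he f hf hef x hx hxf
        rw [Finset.mem_insert] at he hf
        rcases he with rfl | he <;> rcases hf with rfl | hf
        · exact absurd rfl hef
        · rw [Sym2.mem_iff] at hx
          rcases hx with rfl | rfl
          · exact (havoid f hf x hxf).1 rfl
          · exact (havoid f hf x hxf).2 rfl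
        · rw [Sym2.mem_iff] at hxf
          rcases hxf with rfl | rfl
          · exact (havoid e he x hx).1 rfl
          · exact (havoid e he x hx).2 rfl
        · exact hMm.2 e he f hf hef x hx hxf
    · intro M₁ h₁ M₂ h₂ heq
      have hni : ∀ (N : Finset (Sym2 ({v, u}ᶜ : Set V))),
          s(v,u) ∉ N.image (Sym2.map Subtype.val) := by
        intro N hmem
        have : v ∈ ({v, u}ᶜ : Set V) := mem_image_val_avoid N hmem (by simp)
        simp at this
      have := congrArg (Finset.erase · s(v,u)) heq
      simp only [Finset.erase_insert (hni M₁), Finset.erase_insert (hni M₂)] at this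
      exact Finset.image_injective sym2_map_val_injective this
    · intro M hM
      rw [Finset.mem_filter] at hM
      obtain ⟨hMm, hMe⟩ := hM.2
      have havoid : ∀ e ∈ M.erase s(v,u), ∀ x ∈ e, x ∈ ({v, u}ᶜ : Set V) := by
        intro e he x hx
        have hne : e ≠ s(v,u) := Finset.ne_of_mem_erase he
        have heM : e ∈ M := Finset.mem_of_mem_erase he
        simp only [Set.mem_compl_iff, Set.mem_insert_iff, Set.mem_singleton_iff]
        push_neg
        constructor
        · rintro rfl
          exact hMm.2 _ hMe _ heM (fun h => hne h.symm) x (by simp) hx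
        · rintro rfl
          exact hMm.2 _ hMe _ heM (fun h => hne h.symm) x (by simp) hx
      obtain ⟨M', hM'⟩ := exists_preimage _ (M.erase s(v,u)) havoid
      refine ⟨M', Finset.mem_filter.2 ⟨Finset.mem_univ _, ?_⟩, ?_⟩
      · rw [matchy_induce_iff, hM']
        exact matchy_subset (Finset.erase_subset _ _) hMm
      · show insert s(v,u) (M'.image (Sym2.map Subtype.val)) = M
        rw [hM', Finset.insert_erase hMe]

/-- `mcount` is invariant under graph isomorphisms. -/
lemma mcount_iso [Fintype V] [Fintype W] {G : SimpleGraph V} {H : SimpleGraph W}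
    (φ : G ≃g H) : mcount G = mcount H := by
  classical
  rw [mcount, mcount]
  refine Finset.card_bij (fun M _ => M.image (Sym2.map φ)) ?_ ?_ ?_
  · intro M hM
    rw [Finset.mem_filter] at hM ⊢
    obtain ⟨-, hMm, hMd⟩ := hM
    refine ⟨Finset.mem_univ _, ?_, ?_⟩
    · intro e he
      simp only [coe_image, Set.mem_image, mem_coe] at he
      obtain ⟨e', he', rfl⟩ := he
      have := hMm he'
      induction e' with
      | _ a b =>
        simp only [Sym2.map_pair_eq, SimpleGraph.mem_edgeSet] at this ⊢
        exact φ.map_adj_iff.2 this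
    · intro e he f hf hef x hx hxf
      rw [Finset.mem_image] at he hf
      obtain ⟨e', he', rfl⟩ := he
      obtain ⟨f', hf', rfl⟩ := hf
      rw [Sym2.mem_map] at hx hxf
      obtain ⟨a, ha, rfl⟩ := hx
      obtain ⟨b, hb, hba⟩ := hxf
      have : b = a := φ.toEquiv.injective hba
      subst this
      exact hMd e' he' f' hf' (fun h => hef (by rw [h])) b ha hb
  · intro M₁ h₁ M₂ h₂ heq
    exact Finset.image_injective (Sym2.map.injective φ.toEquiv.injective) heq
  · intro N hN
    rw [Finset.mem_filter] at hN
    refine ⟨N.image (Sym2.map φ.symm), Finset.mem_filter.2 ⟨Finset.mem_univ _, ?_, ?_⟩, ?_⟩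
    · intro e he
      simp only [coe_image, Set.mem_image, mem_coe] at he
      obtain ⟨e', he', rfl⟩ := he
      have := hN.2.1 he'
      induction e' with
      | _ a b =>
        simp only [Sym2.map_pair_eq, SimpleGraph.mem_edgeSet] at this ⊢
        exact φ.symm.map_adj_iff.2 this
    · intro e he f hf hef x hx hxf
      rw [Finset.mem_image] at he hf
      obtain ⟨e', he', rfl⟩ := he
      obtain ⟨f', hf', rfl⟩ := hf
      rw [Sym2.mem_map] at hx hxf
      obtain ⟨a, ha, rfl⟩ := hx
      obtain ⟨b, hb, hba⟩ := hxf
      have : b = a := φ.symm.toEquiv.injective hba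
      subst this
      exact hN.2.2 e' he' f' hf' (fun h => hef (by rw [h])) b ha hb
    · show Finset.image (Sym2.map ⇑φ) (Finset.image (Sym2.map ⇑φ.symm) N) = N
      rw [Finset.image_image]
      rw [show (Sym2.map ⇑φ ∘ Sym2.map ⇑φ.symm) = Sym2.map (φ ∘ φ.symm) from (Sym2.map_comp).symm]
      have : Sym2.map (⇑φ ∘ ⇑φ.symm) = id := by
        funext e
        induction e with
        | _ a b => simp
      rw [this, Finset.image_id]


lemma PS_eq_mcount [Fintype V] {G : SimpleGraph V} (hG : G.IsAcyclic) : PS G = mcount G := by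
  rw [PS, mcount]
  have hfe : (univ.filter fun M : Finset (Sym2 V) => IsSachs G M)
      = univ.filter fun M : Finset (Sym2 V) => Matchy G M :=
    Finset.filter_congr (fun M _ => by rw [isSachs_iff_matchy hG])
  rw [hfe, Finset.card_eq_sum_ones]
  refine Finset.sum_congr rfl ?_
  intro M hM
  rw [numCycles_eq_zero (Finset.mem_filter.1 hM).2, pow_zero]

lemma edgeSet_eq_empty_of_card_le_one [Fintype V] (G : SimpleGraph V)
    (h : Fintype.card V ≤ 1) : G.edgeSet = ∅ := by
  rw [Set.eq_empty_iff_forall_notMem]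
  intro e he
  induction e with
  | _ a b =>
    rw [SimpleGraph.mem_edgeSet] at he
    exact he.ne (Fintype.card_le_one_iff.1 h a b)

lemma mcount_eq_one [Fintype V] {G : SimpleGraph V} (h : G.edgeSet = ∅) : mcount G = 1 := by
  rw [mcount]
  have heq : (univ.filter fun M : Finset (Sym2 V) => Matchy G M) = {∅} := by
    ext M
    simp only [Finset.mem_filter, Finset.mem_univ, true_and, Finset.mem_singleton]
    constructor
    · intro hm
      have := hm.1
      rw [h, Set.subset_empty_iff, Finset.coe_eq_empty] at this
      exact this
    · rintro rfl
      exact ⟨by simp, by simp⟩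
  rw [heq, Finset.card_singleton]

def isoOfEq (G : SimpleGraph V) {s t : Set V} (h : s = t) : G.induce s ≃g G.induce t := by
  subst h; exact ⟨Equiv.refl _, Iff.rfl⟩

lemma acyclic_induce {G : SimpleGraph V} (hG : G.IsAcyclic) (s : Set V) :
    (G.induce s).IsAcyclic := by
  intro v c hc
  exact hG (c.map (SimpleGraph.Embedding.induce (G := G) s).toHom)
    (hc.map (SimpleGraph.Embedding.induce (G := G) s).injective)

def induceIsoPre {G : SimpleGraph V} {H : SimpleGraph W} (φ : G ≃g H) (t : Set W) :
    G.induce (⇑φ ⁻¹' t) ≃g H.induce t where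
  toFun x := ⟨φ x.1, x.2⟩
  invFun y := ⟨φ.symm y.1, by
    have : (φ (φ.symm y.1) : W) ∈ t := by
      rw [RelIso.apply_symm_apply]
      exact y.2
    exact this⟩
  left_inv x := Subtype.ext (by simp)
  right_inv y := Subtype.ext (by simp)
  map_rel_iff' := fun {a b} => φ.map_adj_iff

lemma mem_pair_compl {v u x : V} (h : x ∈ ({v, u}ᶜ : Set V)) : x ≠ v ∧ x ≠ u := by
  simpa [Set.mem_compl_iff, not_or] using h

lemma mem_pair_compl' {v u x : V} (h1 : x ≠ v) (h2 : x ≠ u) : x ∈ ({v, u}ᶜ : Set V) := by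
  simp [Set.mem_compl_iff, not_or, h1, h2]

def pairComplIso (G : SimpleGraph V) (v u : V) :
    G.induce ({v, u}ᶜ : Set V) ≃g
      (G.induce ({v}ᶜ : Set V)).induce {x : ({v}ᶜ : Set V) | (x : V) ≠ u} where
  toFun x := ⟨⟨x.1, (mem_pair_compl x.2).1⟩, (mem_pair_compl x.2).2⟩
  invFun y := ⟨y.1.1, mem_pair_compl' y.1.2 y.2⟩
  left_inv x := Subtype.ext rfl
  right_inv y := Subtype.ext (Subtype.ext rfl)
  map_rel_iff' := Iff.rfl

def pathRev (n : ℕ) : pathGraph n ≃g pathGraph n where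
  toEquiv := Fin.revPerm
  map_rel_iff' := by
    intro a b
    have ha := a.isLt
    have hb := b.isLt
    have e1 : ((Fin.revPerm : Equiv.Perm (Fin n)) a) = Fin.rev a := rfl
    have e2 : ((Fin.revPerm : Equiv.Perm (Fin n)) b) = Fin.rev b := rfl
    rw [e1, e2, pathGraph_adj, pathGraph_adj, Fin.val_rev, Fin.val_rev]
    omega

def pathDropLast (n : ℕ) :
    (pathGraph (n+1)).induce ({Fin.last n}ᶜ : Set (Fin (n+1))) ≃g pathGraph n where
  toFun x := ⟨x.1.1, by
    have hx : x.1 ≠ Fin.last n := x.2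
    have h1 := x.1.isLt
    have h2 : x.1.1 ≠ n := fun h => hx (Fin.ext (by simp [h, Fin.val_last]))
    omega⟩
  invFun i := ⟨⟨i.1, by omega⟩, by
    intro h
    have := congrArg Fin.val h
    simp only [Fin.val_last] at this
    have := i.isLt
    omega⟩
  left_inv x := Subtype.ext (Fin.ext rfl)
  right_inv i := Fin.ext rfl
  map_rel_iff' := by
    intro a b
    show (pathGraph n).Adj _ _ ↔ (pathGraph (n+1)).Adj a.1 b.1
    rw [pathGraph_adj, pathGraph_adj]
    exact Iff.rfl

def finn (n : ℕ) : Fin (n+2) := ⟨n, by omega⟩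

def pathDropLastTwo (n : ℕ) :
    (pathGraph (n+2)).induce
      ({Fin.last (n+1), finn n}ᶜ : Set (Fin (n+2))) ≃g pathGraph n where
  toFun x := ⟨x.1.1, by
    obtain ⟨h1, h2⟩ := mem_pair_compl x.2
    have h3 := x.1.isLt
    have h4 : x.1.1 ≠ n + 1 := fun h => h1 (Fin.ext (by simp [h, Fin.val_last]))
    have h5 : x.1.1 ≠ n := fun h => h2 (Fin.ext (by simpa [finn] using h))
    omega⟩
  invFun i := ⟨⟨i.1, by omega⟩, by
    have hi := i.isLt
    apply mem_pair_compl'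
    · intro h
      have := congrArg Fin.val h
      simp only [Fin.val_last] at this
      omega
    · intro h
      have := congrArg Fin.val h
      simp only [finn] at this
      omega⟩
  left_inv x := Subtype.ext (Fin.ext rfl)
  right_inv i := Fin.ext rfl
  map_rel_iff' := by
    intro a b
    show (pathGraph n).Adj _ _ ↔ (pathGraph (n+2)).Adj a.1 b.1
    rw [pathGraph_adj, pathGraph_adj]
    exact Iff.rfl

def isoOfCardLeOne [Fintype V] (G : SimpleGraph V) (h : Fintype.card V ≤ 1) :
    G ≃g pathGraph (Fintype.card V) where
  toEquiv := Fintype.equivFin V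
  map_rel_iff' := by
    intro a b
    have hab : a = b := Fintype.card_le_one_iff.1 h a b
    subst hab
    exact iff_of_false (SimpleGraph.irrefl _) (SimpleGraph.irrefl _)

lemma path_induce_not_reachable {m : ℕ} {k : Fin m} {a b : ({k}ᶜ : Set (Fin m))}
    (ha : (a : Fin m).1 < k.1) (hb : k.1 < (b : Fin m).1) :
    ¬ ((pathGraph m).induce ({k}ᶜ : Set (Fin m))).Reachable a b := by
  intro hr
  have key : ∀ (x y : ({k}ᶜ : Set (Fin m)))
      (_ : ((pathGraph m).induce ({k}ᶜ : Set (Fin m))).Walk x y),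
      ((x : Fin m).1 < k.1 ↔ (y : Fin m).1 < k.1) := by
    intro x y p
    induction p with
    | nil => exact Iff.rfl
    | @cons x z y h q ih =>
      refine Iff.trans ?_ ih
      have hadj : (pathGraph m).Adj x.1 z.1 := h
      rw [pathGraph_adj] at hadj
      have hxk : x.1.1 ≠ k.1 := fun hh => x.2 (Fin.ext hh)
      have hzk : z.1.1 ≠ k.1 := fun hh => z.2 (Fin.ext hh)
      omega
  obtain ⟨p⟩ := hr
  have := key a b p
  omega

lemma pathGraph_last_degree (n : ℕ) :
    (pathGraph (n+2)).degree (Fin.last (n+1)) = 1 := by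
  have hset : (pathGraph (n+2)).neighborFinset (Fin.last (n+1))
      = {finn n} := by
    ext j
    rw [SimpleGraph.mem_neighborFinset, Finset.mem_singleton, pathGraph_adj]
    have hj := j.isLt
    rw [Fin.ext_iff]
    simp only [Fin.val_last, finn]
    omega
  rw [← SimpleGraph.card_neighborFinset_eq_degree, hset, Finset.card_singleton]

lemma pathGraph_last_adj (n : ℕ) :
    (pathGraph (n+2)).Adj (Fin.last (n+1)) (finn n) := by
  rw [pathGraph_adj]
  exact Or.inr (by simp [finn, Fin.val_last])

lemma mcount_instance_irrelevant {α : Type*} (i1 i2 : Fintype α) (G : SimpleGraph α) :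
    @mcount α i1 G = @mcount α i2 G := by
  have h : i1 = i2 := Subsingleton.elim i1 i2
  subst h; rfl

lemma mcount_path : ∀ n : ℕ, mcount (pathGraph n) = Nat.fib (n+1)
  | 0 => by
    rw [mcount_eq_one (edgeSet_eq_empty_of_card_le_one _ (by simp))]
    simp
  | 1 => by
    rw [mcount_eq_one (edgeSet_eq_empty_of_card_le_one _ (by simp))]
    simp
  | (n+2) => by
    rw [mcount_leaf (pathGraph_last_adj n) (pathGraph_last_degree n)]
    have h1 : mcount ((pathGraph (n+2)).induce ({Fin.last (n+1)}ᶜ : Set (Fin (n+2))))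
        = Nat.fib (n+2) := (mcount_iso (pathDropLast (n+1))).trans (mcount_path (n+1))
    have h2 : mcount ((pathGraph (n+2)).induce ({Fin.last (n+1), finn n}ᶜ : Set (Fin (n+2))))
        = Nat.fib (n+1) := (mcount_iso (pathDropLastTwo n)).trans (mcount_path n)
    exact (congrArg₂ (· + ·) ((mcount_instance_irrelevant _ _ _).trans h1)
      ((mcount_instance_irrelevant _ _ _).trans h2)).trans (by
        have h : Nat.fib (n+2+1) = Nat.fib (n+1) + Nat.fib (n+2) := Nat.fib_add_two
        omega)

lemma unique_nbr [Fintype V] {G : SimpleGraph V} {v u : V} (hadj : G.Adj v u)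
    (hdeg : G.degree v = 1) : ∀ a : V, G.Adj v a → a = u := by
  intro a ha
  have h1 : (G.neighborFinset v).card ≤ 1 := by
    rw [SimpleGraph.card_neighborFinset_eq_degree, hdeg]
  exact Finset.card_le_one.1 h1 a ((SimpleGraph.mem_neighborFinset G v a).2 ha) u
    ((SimpleGraph.mem_neighborFinset G v u).2 hadj)

lemma iso_extend {n : ℕ} [Fintype V] {G : SimpleGraph V} {v u : V} (hadj : G.Adj v u)
    (hdeg : G.degree v = 1)
    (ψ : G.induce ({v}ᶜ : Set V) ≃g pathGraph (n+1))
    (u' : ({v}ᶜ : Set V)) (hu'v : (u' : V) = u) (hvalu : (ψ u').1 = n) :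
    Nonempty (G ≃g pathGraph (n+2)) := by
  classical
  have huniq : ∀ a, G.Adj v a → a = u := unique_nbr hadj hdeg
  set f : V → Fin (n+2) := fun x => if h : x = v then Fin.last (n+1)
    else (ψ ⟨x, h⟩).castSucc with hf
  have hfv : f v = Fin.last (n+1) := dif_pos rfl
  have hfx : ∀ (x : V) (h : ¬ x = v), f x = (ψ ⟨x, h⟩).castSucc := fun x h => dif_neg h
  have hinj : Function.Injective f := by
    intro a b hab
    by_cases ha : a = v <;> by_cases hb : b = v
    · rw [ha, hb]
    · exfalso
      rw [ha, hfv, hfx b hb] at hab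
      have := congrArg Fin.val hab
      rw [Fin.val_last, Fin.coe_castSucc] at this
      have := (ψ ⟨b, hb⟩).isLt
      omega
    · exfalso
      rw [hb, hfv, hfx a ha] at hab
      have := congrArg Fin.val hab
      rw [Fin.val_last, Fin.coe_castSucc] at this
      have := (ψ ⟨a, ha⟩).isLt
      omega
    · rw [hfx a ha, hfx b hb] at hab
      have h1 := Fin.castSucc_injective _ hab
      have h2 := ψ.toEquiv.injective h1
      exact congrArg Subtype.val h2
  have hsurj : Function.Surjective f := by
    intro i
    by_cases hi : i = Fin.last (n+1)
    · exact ⟨v, by rw [hfv, hi]⟩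
    · have hlt : i.1 < n + 1 := by
        have h1 := i.isLt
        have h2 : i.1 ≠ n + 1 := fun h => hi (Fin.ext (by rw [Fin.val_last]; exact h))
        omega
      refine ⟨(ψ.symm ⟨i.1, hlt⟩).1, ?_⟩
      have hxv : ¬ (ψ.symm ⟨i.1, hlt⟩).1 = v := (ψ.symm ⟨i.1, hlt⟩).2
      rw [hfx _ hxv]
      have he : (⟨(ψ.symm ⟨i.1, hlt⟩).1, hxv⟩ : ({v}ᶜ : Set V)) = ψ.symm ⟨i.1, hlt⟩ :=
        Subtype.ext rfl
      rw [he]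
      have : ψ (ψ.symm ⟨i.1, hlt⟩) = ⟨i.1, hlt⟩ := ψ.apply_symm_apply _
      rw [this]
      exact Fin.ext rfl
  have key : ∀ (b : V) (hb : ¬ b = v),
      ((pathGraph (n+2)).Adj (Fin.last (n+1)) ((ψ ⟨b, hb⟩).castSucc) ↔ G.Adj v b) := by
    intro b hb
    rw [pathGraph_adj]
    have hblt := (ψ ⟨b, hb⟩).isLt
    simp only [Fin.val_last, Fin.coe_castSucc]
    constructor
    · intro h
      have hval : (ψ ⟨b, hb⟩).1 = n := by omega
      have hfe : ψ ⟨b, hb⟩ = ψ u' := Fin.ext (by rw [hval, hvalu])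
      have heq : (⟨b, hb⟩ : ({v}ᶜ : Set V)) = u' := ψ.toEquiv.injective hfe
      have hbu : b = u := by rw [← hu'v, ← heq]
      rw [hbu]
      exact hadj
    · intro h
      have hbu : b = u := huniq b h
      have heq : (⟨b, hb⟩ : ({v}ᶜ : Set V)) = u' := Subtype.ext (by
        show b = (u' : V)
        rw [hu'v]
        exact hbu)
      rw [heq, hvalu]
      omega
  refine ⟨⟨Equiv.ofBijective f ⟨hinj, hsurj⟩, ?_⟩⟩
  intro a b
  show (pathGraph (n+2)).Adj (f a) (f b) ↔ G.Adj a b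
  by_cases ha : a = v <;> by_cases hb : b = v
  · subst ha; subst hb
    exact iff_of_false (SimpleGraph.irrefl _) (SimpleGraph.irrefl _)
  · subst ha
    rw [hfv, hfx b hb]
    exact key b hb
  · subst hb
    rw [hfv, hfx a ha, SimpleGraph.adj_comm, G.adj_comm]
    exact key a ha
  · rw [hfx a ha, hfx b hb]
    have h1 : (pathGraph (n+1)).Adj (ψ ⟨a, ha⟩) (ψ ⟨b, hb⟩) ↔ G.Adj a b := ψ.map_adj_iff
    rw [← h1, pathGraph_adj, pathGraph_adj]
    simp only [Fin.coe_castSucc]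

set_option maxHeartbeats 2000000 in
theorem main_ind : ∀ (n : ℕ) {α : Type u_1} [Fintype α] (G : SimpleGraph α),
    G.IsAcyclic → Fintype.card α = n →
    mcount G ≤ Nat.fib (n+1) ∧
      (¬ Nonempty (G ≃g pathGraph n) → mcount G < Nat.fib (n+1)) := by
  intro n
  induction n using Nat.strong_induction_on with
  | _ n ih =>
    intro α _ G hG hcard
    subst hcard
    by_cases hsmall : Fintype.card α ≤ 1
    · have h1 : mcount G = 1 := mcount_eq_one (edgeSet_eq_empty_of_card_le_one G hsmall)
      have hfib : Nat.fib (Fintype.card α + 1) = 1 := by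
        have : Fintype.card α = 0 ∨ Fintype.card α = 1 := by omega
        rcases this with h | h <;> rw [h] <;> rfl
      constructor
      · rw [h1, hfib]
      · intro hn
        exact absurd ⟨isoOfCardLeOne G hsmall⟩ hn
    · push_neg at hsmall
      obtain ⟨m, hm⟩ : ∃ m, Fintype.card α = m + 2 := ⟨Fintype.card α - 2, by omega⟩
      rw [hm]
      by_cases hiso0 : ∃ v, G.degree v = 0
      · obtain ⟨v, hv⟩ := hiso0
        have hs : ∀ e ∈ G.edgeSet, ∀ x ∈ e, x ∈ ({v}ᶜ : Set α) := by
          intro e he x hx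
          simp only [Set.mem_compl_iff, Set.mem_singleton_iff]
          rintro rfl
          obtain ⟨a, rfl⟩ := Sym2.mem_iff_exists.1 hx
          have : G.Adj x a := (SimpleGraph.mem_edgeSet G).1 he
          have : 0 < G.degree x := (G.degree_pos_iff_exists_adj x).2 ⟨a, this⟩
          omega
        have hmeq : mcount G = mcount (G.induce ({v}ᶜ : Set α)) :=
          (mcount_induce_of_edges _ hs).trans (mcount_instance_irrelevant _ _ _)
        have hcard1 : Fintype.card ({v}ᶜ : Set α) = m + 1 := by
          rw [Fintype.card_compl_set, Set.card_singleton]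
          omega
        have IH := ih (m+1) (by omega) (G.induce ({v}ᶜ : Set α))
          (acyclic_induce hG _) hcard1
        have hlt : mcount G < Nat.fib (m + 2 + 1) := by
          have h1 : mcount (G.induce ({v}ᶜ : Set α)) ≤ Nat.fib (m + 2) := IH.1
          have h2 : Nat.fib (m + 2) < Nat.fib (m + 2 + 1) := Nat.fib_lt_fib_succ (by omega)
          omega
        exact ⟨le_of_lt hlt, fun _ => hlt⟩
      · have hvex : ∃ v₀ : α, 0 < G.degree v₀ := by
          have : Nonempty α := Fintype.card_pos_iff.1 (by omega)
          obtain ⟨v₀⟩ := this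
          exact ⟨v₀, Nat.pos_of_ne_zero (fun h => hiso0 ⟨v₀, h⟩)⟩
        obtain ⟨v₀, hd0⟩ := hvex
        obtain ⟨v, -, hvdeg⟩ := exists_leaf hG hd0
        obtain ⟨u, hadj⟩ := (G.degree_pos_iff_exists_adj v).1 (by omega)
        have hvu : v ≠ u := hadj.ne
        have hrec : mcount G = mcount (G.induce ({v}ᶜ : Set α))
            + mcount (G.induce ({v, u}ᶜ : Set α)) :=
          (mcount_leaf hadj hvdeg).trans (congrArg₂ (· + ·)
            (mcount_instance_irrelevant _ _ _) (mcount_instance_irrelevant _ _ _))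
        have hcard1 : Fintype.card ({v}ᶜ : Set α) = m + 1 := by
          rw [Fintype.card_compl_set, Set.card_singleton]
          omega
        have hcard2 : Fintype.card ({v, u}ᶜ : Set α) = m := by
          rw [Fintype.card_compl_set]
          have h2 : Fintype.card ({v, u} : Set α) = 2 := by
            rw [← Set.toFinset_card, Set.toFinset_insert, Set.toFinset_singleton,
              Finset.card_insert_of_notMem (by simp [hvu]), Finset.card_singleton]
          omega
        have IH1 := ih (m+1) (by omega) (G.induce ({v}ᶜ : Set α))
          (acyclic_induce hG _) hcard1
        have IH2 := ih m (by omega) (G.induce ({v, u}ᶜ : Set α))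
          (acyclic_induce hG _) hcard2
        have hfib3 : Nat.fib (m+2+1) = Nat.fib (m+1) + Nat.fib (m+2) := Nat.fib_add_two
        have hle1 : mcount (G.induce ({v}ᶜ : Set α)) ≤ Nat.fib (m + 2) := IH1.1
        have hle2 : mcount (G.induce ({v, u}ᶜ : Set α)) ≤ Nat.fib (m + 1) := IH2.1
        constructor
        · omega
        · intro hniso
          by_cases h1iso : Nonempty ((G.induce ({v}ᶜ : Set α)) ≃g pathGraph (m+1))
          · obtain ⟨ψ⟩ := h1iso
            have humem : u ∈ ({v}ᶜ : Set α) := by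
              simp only [Set.mem_compl_iff, Set.mem_singleton_iff]
              exact fun h => hvu h.symm
            set u' : ({v}ᶜ : Set α) := ⟨u, humem⟩ with hu'
            by_cases hend : (ψ u').1 = m ∨ (ψ u').1 = 0
            · exfalso
              apply hniso
              rcases hend with hend | hend
              · exact iso_extend hadj hvdeg ψ u' rfl hend
              · refine iso_extend hadj hvdeg (ψ.trans (pathRev (m+1))) u' rfl ?_
                show ((pathRev (m+1)) (ψ u')).1 = m
                have : ((pathRev (m+1)) (ψ u')) = Fin.rev (ψ u') := rfl
                rw [this, Fin.val_rev, hend]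
                omega
            · push_neg at hend
              have hk1 : 0 < (ψ u').1 := Nat.pos_of_ne_zero hend.2
              have hk2 : (ψ u').1 < m := by
                have := (ψ u').isLt
                omega
              have hniso2 : ¬ Nonempty ((G.induce ({v, u}ᶜ : Set α)) ≃g pathGraph m) := by
                rintro ⟨θ⟩
                have hseteq : {x : ({v}ᶜ : Set α) | (x : α) ≠ u} = ⇑ψ ⁻¹' ({ψ u'}ᶜ : Set (Fin (m+1))) := by
                  ext x
                  simp only [Set.mem_setOf_eq, Set.mem_preimage, Set.mem_compl_iff,
                    Set.mem_singleton_iff]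
                  constructor
                  · intro hx h
                    exact hx (congrArg Subtype.val (ψ.toEquiv.injective h))
                  · intro hx h
                    exact hx (congrArg ⇑ψ (Subtype.ext h))
                have χ : (G.induce ({v, u}ᶜ : Set α)) ≃g
                    (pathGraph (m+1)).induce ({ψ u'}ᶜ : Set (Fin (m+1))) :=
                  ((pairComplIso G v u).trans (isoOfEq _ hseteq)).trans
                    (induceIsoPre ψ ({ψ u'}ᶜ : Set (Fin (m+1))))
                have hpre : ((pathGraph (m+1)).induce ({ψ u'}ᶜ : Set (Fin (m+1)))).Preconnected := by
                  have hiso3 : pathGraph m ≃g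
                      (pathGraph (m+1)).induce ({ψ u'}ᶜ : Set (Fin (m+1))) := θ.symm.trans χ
                  exact (hiso3.preconnected_iff).1 (pathGraph_preconnected m)
                set k := ψ u' with hk
                have hamem : (⟨k.1 - 1, by omega⟩ : Fin (m+1)) ∈ ({k}ᶜ : Set (Fin (m+1))) := by
                  simp only [Set.mem_compl_iff, Set.mem_singleton_iff]
                  intro h
                  have := congrArg Fin.val h
                  simp only at this
                  omega
                have hbmem : (⟨k.1 + 1, by omega⟩ : Fin (m+1)) ∈ ({k}ᶜ : Set (Fin (m+1))) := by
                  simp only [Set.mem_compl_iff, Set.mem_singleton_iff]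
                  intro h
                  have := congrArg Fin.val h
                  simp only at this
                  omega
                have hreach := hpre ⟨⟨k.1 - 1, by omega⟩, hamem⟩ ⟨⟨k.1 + 1, by omega⟩, hbmem⟩
                exact path_induce_not_reachable (by show k.1 - 1 < k.1; omega)
                  (by show k.1 < k.1 + 1; omega) hreach
              have h2 : mcount (G.induce ({v, u}ᶜ : Set α)) < Nat.fib (m + 1) :=
                IH2.2 hniso2
              omega
          · have h1 : mcount (G.induce ({v}ᶜ : Set α)) < Nat.fib (m + 2) := IH1.2 h1iso
            omega

/-- A forest on `n` vertices has permanental sum at most `F(n+1)`, with equality iff it is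
the path `P_n`. -/
theorem PS_forest_le [Fintype V] (G : SimpleGraph V) (hG : G.IsAcyclic) :
    PS G ≤ Nat.fib (Fintype.card V + 1) ∧
    (PS G = Nat.fib (Fintype.card V + 1) ↔ Nonempty (G ≃g pathGraph (Fintype.card V))) := by
  have hmain := main_ind (Fintype.card V) G hG rfl
  rw [PS_eq_mcount hG]
  refine ⟨hmain.1, ?_, ?_⟩
  · intro heq
    by_contra hni
    exact absurd heq (Nat.ne_of_lt (hmain.2 hni))
  · rintro ⟨φ⟩
    rw [mcount_iso φ, mcount_path]

end PermSum
end
end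

section
/- For integers m, t with m, t ≥ 2, m + t = n, and (m,t) ≠ (2, n-2) and (m,t) ≠ (n-2, 2), F(m+1)·F(t+1) < 2·F(n-1). -/
/-- For `m, t ≥ 2` with `m + t = n` and `(m,t) ≠ (2, n-2)`, `(m,t) ≠ (n-2, 2)`,
`F(m+1)·F(t+1) < 2·F(n-1)`. -/
theorem fib_ineq_stmt8 (m t n : ℕ) (hm : 2 ≤ m) (ht : 2 ≤ t) (hmt : m + t = n)
    (h1 : ¬(m = 2 ∧ t = n - 2)) (h2 : ¬(m = n - 2 ∧ t = 2)) :
    Nat.fib (m + 1) * Nat.fib (t + 1) < 2 * Nat.fib (n - 1) := by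
  have hm3 : 3 ≤ m := by
    rcases Nat.lt_or_ge m 3 with h | h
    · exfalso; apply h1; omega
    · exact h
  have ht3 : 3 ≤ t := by
    rcases Nat.lt_or_ge t 3 with h | h
    · exfalso; apply h2; omega
    · exact h
  obtain ⟨a, rfl⟩ : ∃ a, m = a + 3 := ⟨m - 3, by omega⟩
  obtain ⟨b, rfl⟩ : ∃ b, t = b + 3 := ⟨t - 3, by omega⟩
  have hn : n - 1 = (a + 2) + (b + 2) + 1 := by omega
  rw [hn]; conv_rhs => rw [Nat.fib_add]
  have ha2 : Nat.fib (a + 2) = Nat.fib a + Nat.fib (a + 1) := Nat.fib_add_two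
  have ha3 : Nat.fib (a + 3) = Nat.fib (a + 1) + Nat.fib (a + 2) := Nat.fib_add_two
  have ha4 : Nat.fib (a + 4) = Nat.fib (a + 2) + Nat.fib (a + 3) := Nat.fib_add_two
  have hb2 : Nat.fib (b + 2) = Nat.fib b + Nat.fib (b + 1) := Nat.fib_add_two
  have hb3 : Nat.fib (b + 3) = Nat.fib (b + 1) + Nat.fib (b + 2) := Nat.fib_add_two
  have hb4 : Nat.fib (b + 4) = Nat.fib (b + 2) + Nat.fib (b + 3) := Nat.fib_add_two
  have hpa : 0 < Nat.fib (a + 1) := Nat.fib_pos.mpr (by omega)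
  have hpb : 0 < Nat.fib (b + 1) := Nat.fib_pos.mpr (by omega)
  show Nat.fib (a + 4) * Nat.fib (b + 4) < 2 * (Nat.fib (a+2) * Nat.fib (b+2) + Nat.fib (a+3) * Nat.fib (b+3))
  nlinarith [hpa, hpb, ha2, ha3, ha4, hb2, hb3, hb4]
end

section
/- Deletion formula for permanental sums: if uv is an edge of a graph G, then PS(G) = PS(G − uv) + PS(G − u − v) + 2·Σ_{C ∈ 𝒞(uv)} PS(G − V(C)), where 𝒞(uv) is the set of cycles of G containing the edge uv, and PS of the empty graph is 1. -/
open SimpleGraph Finset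
open scoped Classical

noncomputable section

namespace PermSum

variable {V W : Type*}

/-- A subgraph is a cycle: connected and `2`-regular. -/
def IsCycleSubgraph [Fintype V] {G : SimpleGraph V} (H : G.Subgraph) : Prop :=
  H.coe.Connected ∧ ∀ v ∈ H.verts, H.degree v = 2

/-! ### Auxiliary instance-free notions -/

set_option linter.unusedSectionVars false

/-- instance-free degree -/
noncomputable def deg (G : SimpleGraph V) (x : V) : ℕ := (G.neighborSet x).ncard

lemma degree_eq_deg [Fintype V] (G : SimpleGraph V) (x : V) [Fintype (G.neighborSet x)] :
    G.degree x = deg G x := by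
  rw [← card_neighborSet_eq_degree, deg, Set.ncard_eq_toFinset_card', Set.toFinset_card]

/-- instance-free subgraph degree -/
noncomputable def sdeg {G : SimpleGraph V} (H : G.Subgraph) (x : V) : ℕ :=
  (H.neighborSet x).ncard

lemma subgraph_degree_eq_sdeg {G : SimpleGraph V} (H : G.Subgraph) (x : V)
    [Fintype (H.neighborSet x)] : H.degree x = sdeg H x := by
  rw [Subgraph.degree, sdeg, Set.ncard_eq_toFinset_card', Set.toFinset_card]

def Good (G : SimpleGraph V) (c : G.ConnectedComponent) : Prop :=
  ∀ v, G.connectedComponentMk v = c → deg G v = 2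

noncomputable def numCyc (G : SimpleGraph V) : ℕ := Nat.card {c // Good G c}

/-- The graph spanned by a finset of edges. -/
def fE (M : Finset (Sym2 V)) : SimpleGraph V := fromEdgeSet (↑M : Set (Sym2 V))

lemma numCycles_eq_numCyc [Fintype V] (M : Finset (Sym2 V)) :
    numCycles M = numCyc (fE M) := by
  rw [numCycles, numCyc, fE]
  refine Nat.card_congr (Equiv.subtypeEquivRight fun c => ?_)
  unfold Good
  constructor <;> intro h v hv <;> have := h v hv
  · rwa [degree_eq_deg] at this
  · rwa [degree_eq_deg]

/-- instance-free Sachs condition -/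
def Sachs (G : SimpleGraph V) (M : Finset (Sym2 V)) : Prop :=
  (↑M : Set (Sym2 V)) ⊆ G.edgeSet ∧
  (∀ v ∈ (fE M).support, deg (fE M) v = 1 ∨ deg (fE M) v = 2) ∧
  (∀ v w, (fE M).Adj v w → deg (fE M) v = 1 → deg (fE M) w = 1)

lemma isSachs_iff_sachs [Fintype V] (G : SimpleGraph V) (M : Finset (Sym2 V)) :
    IsSachs G M ↔ Sachs G M := by
  unfold IsSachs Sachs fE
  simp only [degree_eq_deg]

lemma PS_congr_inst (i1 i2 : Fintype V) (G : SimpleGraph V) : @PS V i1 G = @PS V i2 G := by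
  cases Subsingleton.elim i1 i2
  rfl

lemma PS_eq [Fintype V] (G : SimpleGraph V) :
    PS G = ∑ M ∈ Finset.univ.filter (fun M : Finset (Sym2 V) => Sachs G M),
      2 ^ numCyc (fE M) := by
  rw [PS]
  refine Finset.sum_congr ?_ (fun M _ => by rw [numCycles_eq_numCyc])
  ext M
  simp only [mem_filter, isSachs_iff_sachs]

lemma isCycleSubgraph_iff [Fintype V] {G : SimpleGraph V} (H : G.Subgraph) :
    IsCycleSubgraph H ↔ H.coe.Connected ∧ ∀ v ∈ H.verts, sdeg H v = 2 := by
  unfold IsCycleSubgraph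
  simp only [subgraph_degree_eq_sdeg]

/-! ### Generic lemmas about `deg`, components, sups and maps -/

lemma deg_congr {G G' : SimpleGraph V} {x : V}
    (h : G.neighborSet x = G'.neighborSet x) : deg G x = deg G' x := by rw [deg, deg, h]

lemma reachable_closed {G : SimpleGraph V} {P : V → Prop}
    (hP : ∀ a b, G.Adj a b → P a → P b) {a b : V} (h : G.Reachable a b) (ha : P a) : P b := by
  obtain ⟨w⟩ := h
  induction w with
  | nil => exact ha
  | cons hadj p ih => exact ih (hP _ _ hadj ha)

lemma reachable_restrict {G G' : SimpleGraph V} {P : V → Prop}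
    (h1 : ∀ a b, G.Adj a b → P a → G'.Adj a b)
    (h2 : ∀ a b, G.Adj a b → P a → P b) {a b : V}
    (hr : G.Reachable a b) (ha : P a) : G'.Reachable a b := by
  obtain ⟨w⟩ := hr
  induction w with
  | nil => exact Reachable.refl _
  | cons hadj p ih => exact (h1 _ _ hadj ha).reachable.trans (ih (h2 _ _ hadj ha))

lemma mem_support_of_reachable_ne {G : SimpleGraph V} {a b : V}
    (h : G.Reachable a b) (hne : a ≠ b) : a ∈ G.support := by
  obtain ⟨w⟩ := h
  cases w with
  | nil => exact absurd rfl hne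
  | cons hadj _ => exact ⟨_, hadj⟩

section DegSup
variable [Finite V]

lemma mem_support_iff_deg_pos (G : SimpleGraph V) (x : V) :
    x ∈ G.support ↔ 0 < deg G x := by
  rw [deg, Set.ncard_pos (Set.toFinite _)]
  exact ⟨fun ⟨y, hy⟩ => ⟨y, hy⟩, fun ⟨y, hy⟩ => ⟨y, hy⟩⟩

lemma deg_sup_of_not_right {G₁ G₂ : SimpleGraph V} {x : V} (hx : x ∉ G₂.support) :
    deg (G₁ ⊔ G₂) x = deg G₁ x := by
  refine deg_congr ?_
  ext y
  simp only [mem_neighborSet, sup_adj, or_iff_left_iff_imp]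
  exact fun h2 => absurd ⟨y, h2⟩ hx

lemma deg_sup_of_not_left {G₁ G₂ : SimpleGraph V} {x : V} (hx : x ∉ G₁.support) :
    deg (G₁ ⊔ G₂) x = deg G₂ x := by
  refine deg_congr ?_
  ext y
  simp only [mem_neighborSet, sup_adj, or_iff_right_iff_imp]
  exact fun h2 => absurd ⟨y, h2⟩ hx

lemma support_sup (G₁ G₂ : SimpleGraph V) :
    (G₁ ⊔ G₂).support = G₁.support ∪ G₂.support := by
  ext x
  simp only [mem_support, sup_adj, Set.mem_union, exists_or]

lemma sup_adj_left {G₁ G₂ : SimpleGraph V} (hd : Disjoint G₁.support G₂.support)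
    {x y : V} (hxy : (G₁ ⊔ G₂).Adj x y) (hx : x ∈ G₁.support) : G₁.Adj x y := by
  rcases (sup_adj _ _ _ _).1 hxy with h1 | h2
  · exact h1
  · exact absurd rfl (hd.ne_of_mem hx ⟨y, h2⟩)

lemma reachable_sup_left {G₁ G₂ : SimpleGraph V} (hd : Disjoint G₁.support G₂.support)
    {a b : V} (ha : a ∈ G₁.support) (h : (G₁ ⊔ G₂).Reachable a b) :
    G₁.Reachable a b ∧ b ∈ G₁.support := by
  have hcl : ∀ x y, (G₁ ⊔ G₂).Adj x y → x ∈ G₁.support → y ∈ G₁.support :=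
    fun x y hxy hx => ⟨x, (sup_adj_left hd hxy hx).symm⟩
  exact ⟨reachable_restrict (fun x y h1 h2 => sup_adj_left hd h1 h2) hcl h ha,
    reachable_closed hcl h ha⟩

lemma good_sup_left {G₁ G₂ : SimpleGraph V} (hd : Disjoint G₁.support G₂.support)
    {c : G₁.ConnectedComponent} (hc : Good G₁ c) :
    Good (G₁ ⊔ G₂) (c.map (Hom.ofLE le_sup_left)) := by
  induction c using SimpleGraph.ConnectedComponent.ind with
  | _ w =>
  have hw : w ∈ G₁.support := by
    rw [mem_support_iff_deg_pos, hc w rfl]; norm_num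
  intro x hx
  rw [ConnectedComponent.map_mk] at hx
  have hr : (G₁ ⊔ G₂).Reachable w x := (ConnectedComponent.eq.1 hx).symm
  obtain ⟨hr1, hx1⟩ := reachable_sup_left hd hw hr
  rw [deg_sup_of_not_right (fun hx2 => hd.ne_of_mem hx1 hx2 rfl)]
  exact hc x (ConnectedComponent.eq.2 hr1.symm)

lemma reachable_sup_right {G₁ G₂ : SimpleGraph V} (hd : Disjoint G₁.support G₂.support)
    {a b : V} (ha : a ∈ G₂.support) (h : (G₁ ⊔ G₂).Reachable a b) :
    G₂.Reachable a b ∧ b ∈ G₂.support := by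
  rw [sup_comm] at h
  exact reachable_sup_left hd.symm ha h

lemma good_sup_right {G₁ G₂ : SimpleGraph V} (hd : Disjoint G₁.support G₂.support)
    {c : G₂.ConnectedComponent} (hc : Good G₂ c) :
    Good (G₁ ⊔ G₂) (c.map (Hom.ofLE le_sup_right)) := by
  induction c using SimpleGraph.ConnectedComponent.ind with
  | _ w =>
  have hw : w ∈ G₂.support := by
    rw [mem_support_iff_deg_pos, hc w rfl]; norm_num
  intro x hx
  rw [ConnectedComponent.map_mk] at hx
  have hr : (G₁ ⊔ G₂).Reachable w x := (ConnectedComponent.eq.1 hx).symm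
  obtain ⟨hr2, hx2⟩ := reachable_sup_right hd hw hr
  rw [deg_sup_of_not_left (fun hx1 => hd.ne_of_mem hx1 hx2 rfl)]
  exact hc x (ConnectedComponent.eq.2 hr2.symm)

lemma numCyc_sup {G₁ G₂ : SimpleGraph V} (hd : Disjoint G₁.support G₂.support) :
    numCyc (G₁ ⊔ G₂) = numCyc G₁ + numCyc G₂ := by
  have hdeg1 : ∀ x ∈ G₁.support, deg (G₁ ⊔ G₂) x = deg G₁ x :=
    fun x hx => deg_sup_of_not_right (fun hx2 => hd.ne_of_mem hx hx2 rfl)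
  have hdeg2 : ∀ x ∈ G₂.support, deg (G₁ ⊔ G₂) x = deg G₂ x :=
    fun x hx => deg_sup_of_not_left (fun hx1 => hd.ne_of_mem hx1 hx rfl)
  let F : {c // Good G₁ c} ⊕ {c // Good G₂ c} → {c // Good (G₁ ⊔ G₂) c} :=
    Sum.elim (fun p => ⟨p.1.map (Hom.ofLE le_sup_left), good_sup_left hd p.2⟩)
      (fun p => ⟨p.1.map (Hom.ofLE le_sup_right), good_sup_right hd p.2⟩)
  have hbij : Function.Bijective F := by
    constructor
    · rintro (⟨c₁, hc₁⟩ | ⟨c₁, hc₁⟩) (⟨c₂, hc₂⟩ | ⟨c₂, hc₂⟩) hF <;>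
      · induction c₁ using SimpleGraph.ConnectedComponent.ind with
        | _ w₁ =>
        induction c₂ using SimpleGraph.ConnectedComponent.ind with
        | _ w₂ =>
        simp only [F, Sum.elim_inl, Sum.elim_inr, Subtype.mk.injEq,
          ConnectedComponent.map_mk, ConnectedComponent.eq] at hF
        first
        | · have hw1 : w₁ ∈ G₁.support := by
              rw [mem_support_iff_deg_pos, hc₁ w₁ rfl]; norm_num
            have := (reachable_sup_left hd hw1 hF).1
            simp only [Sum.inl.injEq, Subtype.mk.injEq]
            exact ConnectedComponent.eq.2 this
        | · have hw1 : w₁ ∈ G₂.support := by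
              rw [mem_support_iff_deg_pos, hc₁ w₁ rfl]; norm_num
            have := (reachable_sup_right hd hw1 hF).1
            simp only [Sum.inr.injEq, Subtype.mk.injEq]
            exact ConnectedComponent.eq.2 this
        | · exfalso
            have hw1 : w₁ ∈ G₁.support := by
              rw [mem_support_iff_deg_pos, hc₁ w₁ rfl]; norm_num
            have hw2 : w₂ ∈ G₂.support := by
              rw [mem_support_iff_deg_pos, hc₂ w₂ rfl]; norm_num
            have := (reachable_sup_left hd hw1 hF).2
            exact hd.ne_of_mem this hw2 rfl
        | · exfalso
            have hw1 : w₁ ∈ G₂.support := by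
              rw [mem_support_iff_deg_pos, hc₁ w₁ rfl]; norm_num
            have hw2 : w₂ ∈ G₁.support := by
              rw [mem_support_iff_deg_pos, hc₂ w₂ rfl]; norm_num
            have := (reachable_sup_right hd hw1 hF).2
            exact hd.ne_of_mem hw2 this rfl
    · rintro ⟨c, hc⟩
      induction c using SimpleGraph.ConnectedComponent.ind with
      | _ w =>
      have hw : w ∈ (G₁ ⊔ G₂).support := by
        rw [mem_support_iff_deg_pos, hc w rfl]; norm_num
      rw [support_sup] at hw
      rcases hw with hw | hw
      · refine ⟨Sum.inl ⟨G₁.connectedComponentMk w, ?_⟩, ?_⟩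
        · intro x hx
          have hr : G₁.Reachable x w := ConnectedComponent.eq.1 hx
          have hx1 : x ∈ G₁.support := by
            rcases eq_or_ne x w with rfl | hne
            · exact hw
            · exact mem_support_of_reachable_ne hr hne
          rw [← hdeg1 x hx1]
          exact hc x (ConnectedComponent.eq.2 (hr.mono le_sup_left))
        · simp only [F, Sum.elim_inl, Subtype.mk.injEq]
          rfl
      · refine ⟨Sum.inr ⟨G₂.connectedComponentMk w, ?_⟩, ?_⟩
        · intro x hx
          have hr : G₂.Reachable x w := ConnectedComponent.eq.1 hx
          have hx2 : x ∈ G₂.support := by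
            rcases eq_or_ne x w with rfl | hne
            · exact hw
            · exact mem_support_of_reachable_ne hr hne
          rw [← hdeg2 x hx2]
          exact hc x (ConnectedComponent.eq.2 (hr.mono le_sup_right))
        · simp only [F, Sum.elim_inr, Subtype.mk.injEq]
          rfl
  rw [numCyc, numCyc, numCyc, ← Nat.card_eq_of_bijective F hbij, Nat.card_sum]

end DegSup

section Map
variable [Finite V] (f : W ↪ V) (G₀ : SimpleGraph W)

/-- the pushforward hom -/
def mapHom : G₀ →g G₀.map f := ⟨f, fun h => (SimpleGraph.map_adj f G₀ _ _).2 ⟨_, _, h, rfl, rfl⟩⟩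

lemma map_neighborSet (w : W) : (G₀.map f).neighborSet (f w) = f '' (G₀.neighborSet w) := by
  ext x
  simp only [mem_neighborSet, SimpleGraph.map_adj, Set.mem_image]
  constructor
  · rintro ⟨a, b, hab, ha, rfl⟩
    exact ⟨b, by rwa [f.injective ha] at hab, rfl⟩
  · rintro ⟨b, hb, rfl⟩
    exact ⟨w, b, hb, rfl, rfl⟩

lemma deg_map (w : W) : deg (G₀.map f) (f w) = deg G₀ w := by
  rw [deg, deg, map_neighborSet, Set.ncard_image_of_injective _ f.injective]

lemma support_map : (G₀.map f).support = f '' G₀.support := by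
  ext x
  simp only [mem_support, SimpleGraph.map_adj, Set.mem_image]
  constructor
  · rintro ⟨y, a, b, hab, rfl, rfl⟩
    exact ⟨a, ⟨b, hab⟩, rfl⟩
  · rintro ⟨a, ⟨b, hab⟩, rfl⟩
    exact ⟨f b, a, b, hab, rfl, rfl⟩

lemma reachable_map_iff {a b : W} :
    (G₀.map f).Reachable (f a) (f b) ↔ G₀.Reachable a b := by
  constructor
  · intro h
    obtain ⟨p⟩ := h
    have key : ∀ {x y : V} (_ : (G₀.map f).Walk x y) (a b : W), f a = x → f b = y →
        G₀.Reachable a b := by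
      intro x y p
      induction p with
      | nil => intro a b ha hb; rw [← hb] at ha; exact (f.injective ha) ▸ Reachable.refl _
      | @cons x c y hadj p ih =>
        intro a b ha hb
        obtain ⟨-, a', c', hac, ha', hc'⟩ := hadj
        obtain rfl : a' = a := f.injective (by rw [ha', ha])
        exact hac.reachable.trans (ih c' b hc' hb)
    exact key p a b rfl rfl
  · exact fun h => h.map (mapHom f G₀)

lemma good_map {c : G₀.ConnectedComponent} (hc : Good G₀ c) :
    Good (G₀.map f) (c.map (mapHom f G₀)) := by
  induction c using SimpleGraph.ConnectedComponent.ind with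
  | _ w =>
  intro x hx
  rw [ConnectedComponent.map_mk] at hx
  have hr : (G₀.map f).Reachable x (f w) := ConnectedComponent.eq.1 hx
  have hx' : x ∈ Set.range f := by
    rcases eq_or_ne x (f w) with rfl | hne
    · exact ⟨w, rfl⟩
    · have hsup := mem_support_of_reachable_ne hr hne
      obtain ⟨y, -, a, b, _, rfl, _⟩ := hsup
      exact ⟨a, rfl⟩
  obtain ⟨a, rfl⟩ := hx'
  rw [deg_map]
  have : G₀.Reachable a w := (reachable_map_iff f G₀).1 hr
  exact hc a (ConnectedComponent.eq.2 this)

lemma numCyc_map : numCyc (G₀.map f) = numCyc G₀ := by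
  let F : {c // Good G₀ c} → {c // Good (G₀.map f) c} :=
    fun p => ⟨p.1.map (mapHom f G₀), good_map f G₀ p.2⟩
  have hbij : Function.Bijective F := by
    constructor
    · rintro ⟨c₁, hc₁⟩ ⟨c₂, hc₂⟩ hF
      induction c₁ using SimpleGraph.ConnectedComponent.ind with
      | _ w₁ =>
      induction c₂ using SimpleGraph.ConnectedComponent.ind with
      | _ w₂ =>
      simp only [F, Subtype.mk.injEq, ConnectedComponent.map_mk,
        ConnectedComponent.eq] at hF ⊢
      exact (reachable_map_iff f G₀).1 hF
    · rintro ⟨c, hc⟩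
      induction c using SimpleGraph.ConnectedComponent.ind with
      | _ x =>
      have hx : x ∈ (G₀.map f).support := by
        rw [mem_support_iff_deg_pos, hc x rfl]; norm_num
      obtain ⟨y, -, a, b, hab, rfl, _⟩ := hx
      refine ⟨⟨G₀.connectedComponentMk a, ?_⟩, ?_⟩
      · intro z hz
        have hr : G₀.Reachable z a := ConnectedComponent.eq.1 hz
        have : (G₀.map f).Reachable (f z) (f a) := (reachable_map_iff f G₀).2 hr
        have h2 := hc (f z) (ConnectedComponent.eq.2 this)
        rwa [deg_map] at h2
      · simp only [F, Subtype.mk.injEq, ConnectedComponent.map_mk]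
        rfl
  rw [numCyc, numCyc, Nat.card_eq_of_bijective F hbij]

end Map

/-- lifting reachability into a graph on a subtype -/
lemma reachable_subtype {G : SimpleGraph V} {S : Set V} {G' : SimpleGraph ↥S}
    (hadj : ∀ (a b : V) (ha : a ∈ S) (hb : b ∈ S), G.Adj a b → G'.Adj ⟨a, ha⟩ ⟨b, hb⟩)
    (hS : ∀ a b, G.Adj a b → a ∈ S → b ∈ S) :
    ∀ {a b : V} (w : G.Walk a b) (ha : a ∈ S) (hb : b ∈ S), G'.Reachable ⟨a, ha⟩ ⟨b, hb⟩ := by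
  intro a b w
  induction w with
  | nil => intro ha hb; exact Reachable.refl _
  | @cons a c b hac p ih =>
    intro ha hb
    have hc : c ∈ S := hS _ _ hac ha
    exact (hadj a c ha hc hac).reachable.trans (ih hc hb)

/-! ### Edge finsets and `fromEdgeSet` -/

lemma fE_adj {M : Finset (Sym2 V)} {a b : V} : (fE M).Adj a b ↔ s(a, b) ∈ M ∧ a ≠ b := by
  rw [fE, fromEdgeSet_adj, Finset.mem_coe]

lemma fE_union (M₁ M₂ : Finset (Sym2 V)) : fE (M₁ ∪ M₂) = fE M₁ ⊔ fE M₂ := by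
  rw [fE, fE, fE, Finset.coe_union, fromEdgeSet_union]

lemma mem_of_fE_adj {M : Finset (Sym2 V)} {a b : V} (h : (fE M).Adj a b) : s(a, b) ∈ M :=
  (fE_adj.1 h).1

/-- edges of a Sachs set are proper -/
lemma sachs_ne {G : SimpleGraph V} {M : Finset (Sym2 V)} (hs : Sachs G M)
    {a b : V} (hab : s(a, b) ∈ M) : a ≠ b := by
  intro h
  subst h
  exact G.irrefl (G.mem_edgeSet.1 (hs.1 hab))

lemma fE_adj_of_mem {G : SimpleGraph V} {M : Finset (Sym2 V)} (hs : Sachs G M)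
    {a b : V} (hab : s(a, b) ∈ M) : (fE M).Adj a b :=
  fE_adj.2 ⟨hab, sachs_ne hs hab⟩

section SingleEdge
variable {u v : V} (huv : u ≠ v)

include huv in
lemma fE_single_adj {a b : V} :
    (fE {s(u, v)}).Adj a b ↔ (a = u ∧ b = v) ∨ (a = v ∧ b = u) := by
  rw [fE_adj, Finset.mem_singleton]
  constructor
  · rintro ⟨he, hne⟩
    rcases Sym2.eq_iff.1 he with ⟨rfl, rfl⟩ | ⟨rfl, rfl⟩
    · exact Or.inl ⟨rfl, rfl⟩
    · exact Or.inr ⟨rfl, rfl⟩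
  · rintro (⟨rfl, rfl⟩ | ⟨rfl, rfl⟩)
    · exact ⟨rfl, huv⟩
    · exact ⟨Sym2.eq_swap, huv.symm⟩

include huv in
lemma support_single : (fE {s(u, v)}).support = {u, v} := by
  ext x
  simp only [mem_support, Set.mem_insert_iff, Set.mem_singleton_iff]
  constructor
  · rintro ⟨y, hy⟩
    rcases (fE_single_adj huv).1 hy with ⟨rfl, _⟩ | ⟨rfl, _⟩
    · exact Or.inl rfl
    · exact Or.inr rfl
  · rintro (rfl | rfl)
    · exact ⟨v, (fE_single_adj huv).2 (Or.inl ⟨rfl, rfl⟩)⟩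
    · exact ⟨u, (fE_single_adj huv).2 (Or.inr ⟨rfl, rfl⟩)⟩

include huv in
lemma deg_single_le (x : V) : deg (fE {s(u, v)}) x ≤ 1 := by
  rw [deg]
  refine le_trans (Set.ncard_le_ncard ?_ (Set.finite_singleton (if x = u then v else u))) ?_
  · intro y hy
    rcases (fE_single_adj huv).1 hy with ⟨rfl, rfl⟩ | ⟨rfl, rfl⟩
    · simp
    · simp [huv.symm]
  · simp

include huv in
lemma deg_single_u : deg (fE {s(u, v)}) u = 1 := by
  have h1 : (fE {s(u, v)}).neighborSet u = {v} := by
    ext y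
    simp only [mem_neighborSet, Set.mem_singleton_iff]
    constructor
    · intro hy
      rcases (fE_single_adj huv).1 hy with ⟨_, rfl⟩ | ⟨h, _⟩
      · rfl
      · exact absurd h huv
    · rintro rfl
      exact (fE_single_adj huv).2 (Or.inl ⟨rfl, rfl⟩)
  rw [deg, h1, Set.ncard_singleton]

include huv in
lemma deg_single_v : deg (fE {s(u, v)}) v = 1 := by
  have : ({s(u, v)} : Finset (Sym2 V)) = {s(v, u)} := by rw [Sym2.eq_swap]
  rw [this]
  exact deg_single_u huv.symm

include huv in
lemma numCyc_single [Finite V] : numCyc (fE {s(u, v)}) = 0 := by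
  rw [numCyc]
  have : IsEmpty {c // Good (fE {s(u, v)}) c} := by
    constructor
    rintro ⟨c, hc⟩
    induction c using SimpleGraph.ConnectedComponent.ind with
    | _ w =>
    have h2 := hc w rfl
    have := deg_single_le huv w
    omega
  exact Nat.card_of_isEmpty

include huv in
lemma sachs_single {G : SimpleGraph V} (h : G.Adj u v) : Sachs G {s(u, v)} := by
  refine ⟨?_, ?_, ?_⟩
  · intro e he
    rw [Finset.coe_singleton, Set.mem_singleton_iff] at he
    rw [he]
    exact G.mem_edgeSet.2 h
  · intro x hx
    rw [support_single huv] at hx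
    rcases hx with rfl | rfl
    · exact Or.inl (deg_single_u huv)
    · exact Or.inl (deg_single_v huv)
  · intro x y hxy _
    rcases (fE_single_adj huv).1 hxy with ⟨_, rfl⟩ | ⟨_, rfl⟩
    · exact deg_single_v huv
    · exact deg_single_u huv

end SingleEdge

/-! ### Cycle subgraphs -/

section Cyc
variable [Finite V] {G : SimpleGraph V}

/-- edge finset of a subgraph -/
noncomputable def EH (H : G.Subgraph) : Finset (Sym2 V) := (Set.toFinite H.edgeSet).toFinset

lemma mem_EH {H : G.Subgraph} {e : Sym2 V} : e ∈ EH H ↔ e ∈ H.edgeSet :=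
  Set.Finite.mem_toFinset _

lemma fE_EH (H : G.Subgraph) : fE (EH H) = H.spanningCoe := by
  ext a b
  rw [fE_adj, mem_EH, Subgraph.mem_edgeSet]
  exact ⟨fun h => h.1, fun h => ⟨h, (H.adj_sub h).ne⟩⟩

lemma deg_spanningCoe (H : G.Subgraph) (x : V) : deg H.spanningCoe x = sdeg H x := rfl

lemma spanningCoe_support_of_cycle {H : G.Subgraph}
    (hH : ∀ x ∈ H.verts, sdeg H x = 2) : H.spanningCoe.support = H.verts := by
  ext x
  constructor
  · rintro ⟨y, hy⟩
    exact (hy : H.Adj x y).fst_mem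
  · intro hx
    have h2 := hH x hx
    rw [sdeg] at h2
    have : 0 < (H.neighborSet x).ncard := by omega
    rw [Set.ncard_pos (Set.toFinite _)] at this
    obtain ⟨y, hy⟩ := this
    exact ⟨y, hy⟩

/-- hom from coe to spanningCoe -/
def coeSpanHom (H : G.Subgraph) : H.coe →g H.spanningCoe :=
  ⟨Subtype.val, fun h => h⟩

lemma reachable_spanningCoe_of_verts {H : G.Subgraph} (hconn : H.coe.Connected)
    {a b : V} (ha : a ∈ H.verts) (hb : b ∈ H.verts) : H.spanningCoe.Reachable a b := by
  have := hconn.preconnected ⟨a, ha⟩ ⟨b, hb⟩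
  exact this.map (coeSpanHom H)

lemma verts_closed_spanningCoe {H : G.Subgraph} :
    ∀ a b, H.spanningCoe.Adj a b → a ∈ H.verts → b ∈ H.verts :=
  fun _ _ h _ => (h : H.Adj _ _).snd_mem

lemma numCyc_cycle [Finite V] {H : G.Subgraph} (hconn : H.coe.Connected)
    (hreg : ∀ x ∈ H.verts, sdeg H x = 2) : numCyc H.spanningCoe = 1 := by
  obtain ⟨⟨u₀, hu₀⟩⟩ := hconn.nonempty
  rw [numCyc, Nat.card_eq_one_iff_unique]
  have hgood : Good H.spanningCoe (H.spanningCoe.connectedComponentMk u₀) := by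
    intro x hx
    have hr : H.spanningCoe.Reachable u₀ x := (ConnectedComponent.eq.1 hx).symm
    have hxv : x ∈ H.verts := reachable_closed verts_closed_spanningCoe hr hu₀
    rw [deg_spanningCoe]
    exact hreg x hxv
  constructor
  · constructor
    rintro ⟨c₁, hc₁⟩ ⟨c₂, hc₂⟩
    have key : ∀ c : H.spanningCoe.ConnectedComponent, Good H.spanningCoe c →
        c = H.spanningCoe.connectedComponentMk u₀ := by
      intro c hc
      induction c using SimpleGraph.ConnectedComponent.ind with
      | _ w =>
      have h2 := hc w rfl
      have hw : w ∈ H.spanningCoe.support := by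
        rw [mem_support_iff_deg_pos, h2]; norm_num
      have hwv : w ∈ H.verts := by
        rwa [spanningCoe_support_of_cycle hreg] at hw
      exact ConnectedComponent.eq.2 (reachable_spanningCoe_of_verts hconn hwv hu₀)
    exact Subtype.ext ((key c₁ hc₁).trans (key c₂ hc₂).symm)
  · exact ⟨⟨_, hgood⟩⟩

end Cyc

/-! ### Lifting edge sets from an induced subgraph -/

section Lift
variable (S : Set V)

/-- the inclusion embedding -/
def incl : ↥S ↪ V := Function.Embedding.subtype _

lemma incl_apply (x : ↥S) : incl S x = ↑x := rfl

lemma range_incl : Set.range (incl S) = S := Subtype.range_coe_subtype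

lemma induce_adj' {G : SimpleGraph V} {x y : ↥S} :
    (G.induce S).Adj x y ↔ G.Adj ↑x ↑y := Iff.rfl

/-- push a finset of edges over `S` into `V` -/
def liftEdges (M₀ : Finset (Sym2 ↥S)) : Finset (Sym2 V) :=
  M₀.map ((incl S).sym2Map)

lemma mem_liftEdges {M₀ : Finset (Sym2 ↥S)} {e : Sym2 V} :
    e ∈ liftEdges S M₀ ↔ ∃ e₀ ∈ M₀, Sym2.map (incl S) e₀ = e := by
  simp only [liftEdges, Finset.mem_map, Function.Embedding.sym2Map_apply]

lemma pair_mem_liftEdges {M₀ : Finset (Sym2 ↥S)} {x y : ↥S} :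
    s((x : V), (y : V)) ∈ liftEdges S M₀ ↔ s(x, y) ∈ M₀ := by
  rw [mem_liftEdges]
  constructor
  · rintro ⟨e₀, he₀, hmap⟩
    induction e₀ using Sym2.ind with
    | _ p q =>
    rw [Sym2.map_pair_eq] at hmap
    rcases Sym2.eq_iff.1 hmap with ⟨hp, hq⟩ | ⟨hp, hq⟩
    · have : p = x := Subtype.ext hp
      have h2 : q = y := Subtype.ext hq
      rwa [this, h2] at he₀
    · have : p = y := Subtype.ext hp
      have h2 : q = x := Subtype.ext hq
      rw [this, h2] at he₀
      rwa [Sym2.eq_swap] at he₀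
  · intro h
    exact ⟨s(x, y), h, Sym2.map_pair_eq _ _ _⟩

lemma liftEdges_endpoints {M₀ : Finset (Sym2 ↥S)} {e : Sym2 V}
    (he : e ∈ liftEdges S M₀) : ∀ x ∈ e, x ∈ S := by
  obtain ⟨e₀, _, rfl⟩ := (mem_liftEdges S).1 he
  induction e₀ using Sym2.ind with
  | _ p q =>
  intro x hx
  rw [Sym2.map_pair_eq] at hx
  rcases Sym2.mem_iff.1 hx with rfl | rfl
  · exact p.2
  · exact q.2

lemma fE_liftEdges (M₀ : Finset (Sym2 ↥S)) :
    fE (liftEdges S M₀) = (fE M₀).map (incl S) := by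
  ext a b
  rw [fE_adj, SimpleGraph.map_adj]
  constructor
  · rintro ⟨he, hne⟩
    obtain ⟨e₀, he₀, hmap⟩ := (mem_liftEdges S).1 he
    induction e₀ using Sym2.ind with
    | _ p q =>
    rw [Sym2.map_pair_eq] at hmap
    have hpq : p ≠ q := by
      rintro rfl
      rcases Sym2.eq_iff.1 hmap with ⟨h1, h2⟩ | ⟨h1, h2⟩ <;>
        exact hne (by rw [← h1, ← h2])
    rcases Sym2.eq_iff.1 hmap with ⟨h1, h2⟩ | ⟨h1, h2⟩
    · exact ⟨p, q, fE_adj.2 ⟨he₀, hpq⟩, h1, h2⟩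
    · exact ⟨q, p, fE_adj.2 ⟨Sym2.eq_swap ▸ he₀, hpq.symm⟩, h2, h1⟩
  · rintro ⟨p, q, hpq, rfl, rfl⟩
    obtain ⟨hmem, hne⟩ := fE_adj.1 hpq
    refine ⟨(mem_liftEdges S).2 ⟨s(p, q), hmem, Sym2.map_pair_eq _ _ _⟩, ?_⟩
    exact fun h => hne (Subtype.ext h)

/-- pull a finset of edges inside `S` back to `↥S` -/
noncomputable def restrictEdges (M : Finset (Sym2 V)) : Finset (Sym2 ↥S) :=
  M.preimage ((incl S).sym2Map) ((incl S).sym2Map.injective.injOn)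

lemma restrict_lift (M₀ : Finset (Sym2 ↥S)) :
    restrictEdges S (liftEdges S M₀) = M₀ :=
  Finset.preimage_map _ _

lemma lift_restrict {M : Finset (Sym2 V)} (hM : ∀ e ∈ M, ∀ x ∈ e, x ∈ S) :
    liftEdges S (restrictEdges S M) = M := by
  ext e
  rw [mem_liftEdges]
  constructor
  · rintro ⟨e₀, he₀, rfl⟩
    have := Finset.mem_preimage.1 he₀
    exact this
  · intro he
    induction e using Sym2.ind with
    | _ x y =>
    have hx : x ∈ S := hM _ he _ (Sym2.mem_mk_left x y)
    have hy : y ∈ S := hM _ he _ (Sym2.mem_mk_right x y)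
    refine ⟨s(⟨x, hx⟩, ⟨y, hy⟩), Finset.mem_preimage.2 ?_, ?_⟩
    · rw [Function.Embedding.sym2Map_apply, Sym2.map_pair_eq]
      exact he
    · rw [Sym2.map_pair_eq]
      rfl

end Lift

/-! ### The fiber engine -/

section Fiber
variable [Fintype V] (G : SimpleGraph V) (S : Set V) (E : Finset (Sym2 V))

/-- Sachs sets decomposing as a fixed core `E` (outside `S`) plus edges inside `S`. -/
def Fiber : Finset (Finset (Sym2 V)) :=
  univ.filter (fun M => Sachs G M ∧ E ⊆ M ∧ ∀ e ∈ M, e ∉ E → ∀ x ∈ e, x ∈ S)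

variable {G S E}

lemma support_fE_subset_compl (hES : ∀ e ∈ E, ∀ x ∈ e, x ∉ S) :
    (fE E).support ⊆ Sᶜ := by
  rintro x ⟨y, hy⟩
  exact hES _ (mem_of_fE_adj hy) x (Sym2.mem_mk_left x y)

lemma support_lift_subset (M₀ : Finset (Sym2 ↥S)) :
    (fE (liftEdges S M₀)).support ⊆ S := by
  rw [fE_liftEdges, support_map]
  rintro x ⟨w, _, rfl⟩
  exact w.2

lemma disj_core_lift (hES : ∀ e ∈ E, ∀ x ∈ e, x ∉ S) (M₀ : Finset (Sym2 ↥S)) :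
    Disjoint (fE E).support (fE (liftEdges S M₀)).support :=
  Set.disjoint_of_subset (support_fE_subset_compl hES) (support_lift_subset M₀)
    (disjoint_compl_left)

lemma deg_core (hES : ∀ e ∈ E, ∀ x ∈ e, x ∉ S) (M₀ : Finset (Sym2 ↥S)) {x : V}
    (hx : x ∉ S) : deg (fE (E ∪ liftEdges S M₀)) x = deg (fE E) x := by
  rw [fE_union]
  exact deg_sup_of_not_right (fun hmem => hx (support_lift_subset M₀ hmem))

lemma deg_side (hES : ∀ e ∈ E, ∀ x ∈ e, x ∉ S) (M₀ : Finset (Sym2 ↥S)) (w : ↥S) :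
    deg (fE (E ∪ liftEdges S M₀)) ↑w = deg (fE M₀) w := by
  rw [fE_union]
  have h1 : (w : V) ∉ (fE E).support := fun hmem => support_fE_subset_compl hES hmem w.2
  rw [deg_sup_of_not_left h1, fE_liftEdges]
  exact deg_map (incl S) (fE M₀) w

lemma numCyc_core_union (hES : ∀ e ∈ E, ∀ x ∈ e, x ∉ S) (M₀ : Finset (Sym2 ↥S)) :
    numCyc (fE (E ∪ liftEdges S M₀)) = numCyc (fE E) + numCyc (fE M₀) := by
  rw [fE_union, numCyc_sup (disj_core_lift hES M₀), fE_liftEdges,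
    numCyc_map (incl S) (fE M₀)]

lemma sachs_union_iff (hE : Sachs G E) (hES : ∀ e ∈ E, ∀ x ∈ e, x ∉ S)
    (M₀ : Finset (Sym2 ↥S)) :
    Sachs G (E ∪ liftEdges S M₀) ↔ Sachs (G.induce S) M₀ := by
  set M := E ∪ liftEdges S M₀ with hMdef
  have hsup : fE M = fE E ⊔ fE (liftEdges S M₀) := fE_union _ _
  have hsupp : (fE M).support = (fE E).support ∪ (fE (liftEdges S M₀)).support := by
    rw [hsup, support_sup]
  have hdisj := disj_core_lift hES M₀
  have hliftadj : ∀ (w w' : ↥S), (fE M₀).Adj w w' → (fE M).Adj ↑w ↑w' := by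
    intro w w' h
    rw [hsup, sup_adj, fE_liftEdges]
    exact Or.inr ((SimpleGraph.map_adj _ _ _ _).2 ⟨w, w', h, rfl, rfl⟩)
  have hadj_cases : ∀ x y, (fE M).Adj x y →
      (fE E).Adj x y ∨ ∃ (w w' : ↥S), (fE M₀).Adj w w' ∧ ↑w = x ∧ ↑w' = y := by
    intro x y h
    rw [hsup, sup_adj, fE_liftEdges] at h
    rcases h with h | h
    · exact Or.inl h
    · exact Or.inr ((SimpleGraph.map_adj _ _ _ _).1 h)
  constructor
  · rintro ⟨h1, h2, h3⟩
    refine ⟨?_, ?_, ?_⟩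
    · intro e he₀
      rw [Finset.mem_coe] at he₀
      induction e using Sym2.ind with
      | _ p q =>
      have : s((p : V), (q : V)) ∈ M :=
        Finset.mem_union_right _ ((pair_mem_liftEdges S).2 he₀)
      have := h1 (Finset.mem_coe.2 this)
      rw [SimpleGraph.mem_edgeSet] at this ⊢
      exact this
    · intro w hw
      rw [mem_support_iff_deg_pos] at hw
      have hw' : (w : V) ∈ (fE M).support := by
        rw [mem_support_iff_deg_pos, deg_side hES M₀ w]
        exact hw
      rcases h2 _ hw' with h | h
      · rw [deg_side hES M₀ w] at h
        exact Or.inl h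
      · rw [deg_side hES M₀ w] at h
        exact Or.inr h
    · intro w w' hww hdw
      have h1' : (fE M).Adj ↑w ↑w' := hliftadj _ _ hww
      have := h3 _ _ h1' (by rwa [deg_side hES M₀ w])
      rwa [deg_side hES M₀ w'] at this
  · rintro ⟨h1, h2, h3⟩
    refine ⟨?_, ?_, ?_⟩
    · intro e he
      rw [Finset.mem_coe, hMdef, Finset.mem_union] at he
      rcases he with he | he
      · exact hE.1 he
      · induction e using Sym2.ind with
        | _ x y =>
        have hx : x ∈ S := liftEdges_endpoints S he x (Sym2.mem_mk_left x y)
        have hy : y ∈ S := liftEdges_endpoints S he y (Sym2.mem_mk_right x y)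
        have : s(⟨x, hx⟩, ⟨y, hy⟩) ∈ M₀ := by
          rw [← pair_mem_liftEdges S]
          exact he
        have := h1 (Finset.mem_coe.2 this)
        rw [SimpleGraph.mem_edgeSet] at this ⊢
        exact this
    · intro x hx
      rw [hsupp] at hx
      rcases hx with hx | hx
      · have hnotS : x ∉ S := support_fE_subset_compl hES hx
        rw [deg_core hES M₀ hnotS]
        exact hE.2.1 x hx
      · have hxS : x ∈ S := support_lift_subset M₀ hx
        rw [fE_liftEdges, support_map] at hx
        obtain ⟨w, hw, rfl⟩ := hx
        rw [incl_apply, deg_side hES M₀ w]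
        exact h2 w hw
    · intro x y hxy hdx
      rcases hadj_cases _ _ hxy with h | ⟨w, w', hww, rfl, rfl⟩
      · have hx : x ∈ (fE E).support := ⟨y, h⟩
        have hy : y ∈ (fE E).support := ⟨x, h.symm⟩
        have hnx : x ∉ S := support_fE_subset_compl hES hx
        have hny : y ∉ S := support_fE_subset_compl hES hy
        rw [deg_core hES M₀ hnx] at hdx
        rw [deg_core hES M₀ hny]
        exact hE.2.2 _ _ h hdx
      · rw [deg_side hES M₀ w] at hdx
        rw [deg_side hES M₀ w']
        exact h3 _ _ hww hdx

lemma lift_disjoint_core (hES : ∀ e ∈ E, ∀ x ∈ e, x ∉ S) (M₀ : Finset (Sym2 ↥S)) :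
    Disjoint E (liftEdges S M₀) := by
  rw [Finset.disjoint_right]
  intro e he hE'
  induction e using Sym2.ind with
  | _ x y =>
  exact hES _ hE' x (Sym2.mem_mk_left x y) (liftEdges_endpoints S he x (Sym2.mem_mk_left x y))

lemma mem_fiber_iff {M : Finset (Sym2 V)} :
    M ∈ Fiber G S E ↔ Sachs G M ∧ E ⊆ M ∧ ∀ e ∈ M, e ∉ E → ∀ x ∈ e, x ∈ S := by
  rw [Fiber, Finset.mem_filter]
  simp only [Finset.mem_univ, true_and]

/-- The key bijection: summing over a fiber. -/
lemma sum_fiber (hE : Sachs G E) (hES : ∀ e ∈ E, ∀ x ∈ e, x ∉ S) :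
    ∑ M ∈ Fiber G S E, 2 ^ numCyc (fE M) = 2 ^ numCyc (fE E) * PS (G.induce S) := by
  rw [PS_eq, Finset.mul_sum]
  refine Finset.sum_nbij' (fun M => restrictEdges S (M \ E))
    (fun M₀ => E ∪ liftEdges S M₀) ?_ ?_ ?_ ?_ ?_
  · -- forward membership
    intro M hM
    obtain ⟨hs, hEM, hout⟩ := mem_fiber_iff.1 hM
    have hsub : ∀ e ∈ M \ E, ∀ x ∈ e, x ∈ S := by
      intro e he
      rw [Finset.mem_sdiff] at he
      exact hout e he.1 he.2
    have hrt : E ∪ liftEdges S (restrictEdges S (M \ E)) = M := by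
      rw [lift_restrict S hsub, Finset.union_sdiff_of_subset hEM]
    rw [Finset.mem_filter]
    refine ⟨Finset.mem_univ _, ?_⟩
    rw [← sachs_union_iff hE hES, hrt]
    exact hs
  · -- backward membership
    intro M₀ hM₀
    rw [Finset.mem_filter] at hM₀
    rw [mem_fiber_iff]
    refine ⟨(sachs_union_iff hE hES M₀).2 hM₀.2, Finset.subset_union_left, ?_⟩
    intro e he hne
    rw [Finset.mem_union] at he
    rcases he with he | he
    · exact absurd he hne
    · exact liftEdges_endpoints S he
  · -- left inverse
    intro M hM
    obtain ⟨hs, hEM, hout⟩ := mem_fiber_iff.1 hM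
    have hsub : ∀ e ∈ M \ E, ∀ x ∈ e, x ∈ S := by
      intro e he
      rw [Finset.mem_sdiff] at he
      exact hout e he.1 he.2
    show E ∪ liftEdges S (restrictEdges S (M \ E)) = M
    rw [lift_restrict S hsub, Finset.union_sdiff_of_subset hEM]
  · -- right inverse
    intro M₀ _
    show restrictEdges S ((E ∪ liftEdges S M₀) \ E) = M₀
    rw [Finset.union_sdiff_cancel_left (lift_disjoint_core hES M₀), restrict_lift]
  · -- weights
    intro M hM
    obtain ⟨hs, hEM, hout⟩ := mem_fiber_iff.1 hM
    have hsub : ∀ e ∈ M \ E, ∀ x ∈ e, x ∈ S := by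
      intro e he
      rw [Finset.mem_sdiff] at he
      exact hout e he.1 he.2
    have hrt : E ∪ liftEdges S (restrictEdges S (M \ E)) = M := by
      rw [lift_restrict S hsub, Finset.union_sdiff_of_subset hEM]
    conv_lhs => rw [← hrt]
    rw [numCyc_core_union hES, pow_add]

end Fiber

/-! ### The component subgraph at a vertex -/

section Comp
variable [Fintype V] {G : SimpleGraph V}

/-- The subgraph of `G` spanned by the component of `u` in the graph of `M`. -/
def compSub (G : SimpleGraph V) (M : Finset (Sym2 V)) (u : V) : G.Subgraph where
  verts := {x | (fE M).Reachable u x}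
  Adj a b := G.Adj a b ∧ (fE M).Adj a b ∧ (fE M).Reachable u a ∧ (fE M).Reachable u b
  adj_sub h := h.1
  edge_vert h := h.2.2.1
  symm := ⟨fun a b ⟨h1, h2, h3, h4⟩ => ⟨h1.symm, h2.symm, h4, h3⟩⟩

lemma compSub_verts {M : Finset (Sym2 V)} {u x : V} :
    x ∈ (compSub G M u).verts ↔ (fE M).Reachable u x := Iff.rfl

lemma compSub_adj {M : Finset (Sym2 V)} {u a b : V} (hs : Sachs G M)
    (ha : (fE M).Reachable u a) :
    (compSub G M u).Adj a b ↔ (fE M).Adj a b := by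
  constructor
  · exact fun h => h.2.1
  · intro h
    refine ⟨G.mem_edgeSet.1 (hs.1 (mem_of_fE_adj h)), h, ha, ha.trans h.reachable⟩

/-- degree 2 propagates along components in a Sachs graph -/
lemma deg_two_propagate {M : Finset (Sym2 V)} {u : V} (hs : Sachs G M)
    (hd2 : deg (fE M) u = 2) {x : V} (hr : (fE M).Reachable u x) :
    deg (fE M) x = 2 := by
  refine reachable_closed (P := fun y => deg (fE M) y = 2) ?_ hr hd2
  intro a b hab hda
  have hb : b ∈ (fE M).support := ⟨a, hab.symm⟩
  rcases hs.2.1 b hb with h1 | h2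
  · have := hs.2.2 b a hab.symm h1
    omega
  · exact h2

lemma compSub_sdeg {M : Finset (Sym2 V)} {u x : V} (hs : Sachs G M)
    (hx : (fE M).Reachable u x) : sdeg (compSub G M u) x = deg (fE M) x := by
  rw [sdeg, deg]
  congr 1
  ext y
  rw [Subgraph.mem_neighborSet, mem_neighborSet, compSub_adj hs hx]

lemma compSub_connected {M : Finset (Sym2 V)} {u : V} (hs : Sachs G M) :
    (compSub G M u).coe.Connected := by
  rw [connected_iff]
  constructor
  · -- preconnected
    rintro ⟨a, ha⟩ ⟨b, hb⟩
    have hab : (fE M).Reachable a b := (ha : (fE M).Reachable u a).symm.trans hb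
    obtain ⟨w⟩ := hab
    refine reachable_subtype (S := (compSub G M u).verts) ?_ ?_ w ha hb
    · intro a b ha hb hadj
      show (compSub G M u).Adj a b
      rw [compSub_adj hs ha]
      exact hadj
    · intro a b hadj ha
      exact (ha : (fE M).Reachable u a).trans hadj.reachable
  · exact ⟨⟨u, Reachable.refl u⟩⟩

lemma compSub_isCycle {M : Finset (Sym2 V)} {u : V} (hs : Sachs G M)
    (hd2 : deg (fE M) u = 2) : IsCycleSubgraph (compSub G M u) := by
  rw [isCycleSubgraph_iff]
  refine ⟨compSub_connected hs, ?_⟩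
  intro x hx
  rw [compSub_sdeg hs hx]
  exact deg_two_propagate hs hd2 hx

lemma compSub_adj_uv {M : Finset (Sym2 V)} {u v : V} (h : G.Adj u v)
    (hD : s(u, v) ∈ M) : (compSub G M u).Adj u v := by
  have hadj : (fE M).Adj u v := fE_adj.2 ⟨hD, h.ne⟩
  exact ⟨h, hadj, Reachable.refl u, hadj.reachable⟩

end Comp

/-! ### Class analysis -/

section Classes
variable [Fintype V] {G : SimpleGraph V} {u v : V}

lemma sachs_deleteEdges_iff (h : G.Adj u v) (M : Finset (Sym2 V)) :
    (Sachs G M ∧ s(u, v) ∉ M) ↔ Sachs (G.deleteEdges {s(u, v)}) M := by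
  have hedge : (G.deleteEdges {s(u, v)}).edgeSet = G.edgeSet \ {s(u, v)} :=
    edgeSet_deleteEdges _
  constructor
  · rintro ⟨⟨h1, h2, h3⟩, hD⟩
    refine ⟨?_, h2, h3⟩
    intro e he
    rw [hedge]
    refine ⟨h1 he, ?_⟩
    rintro rfl
    exact hD he
  · rintro ⟨h1, h2, h3⟩
    refine ⟨⟨?_, h2, h3⟩, ?_⟩
    · intro e he
      have := h1 he
      rw [hedge] at this
      exact this.1
    · intro hD
      have := h1 hD
      rw [hedge] at this
      exact this.2 rfl

lemma deg_one_unique {G' : SimpleGraph V} {x y y' : V} (h1 : deg G' x = 1)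
    (hy : G'.Adj x y) (hy' : G'.Adj x y') : y = y' := by
  rw [deg] at h1
  obtain ⟨a, ha⟩ := Set.ncard_eq_one.1 h1
  have h2 : y ∈ G'.neighborSet x := hy
  have h3 : y' ∈ G'.neighborSet x := hy'
  rw [ha, Set.mem_singleton_iff] at h2 h3
  rw [h2, h3]

/-- class B is the fiber of the single edge `uv`. -/
lemma classB_eq_fiber (h : G.Adj u v) :
    univ.filter (fun M : Finset (Sym2 V) =>
        Sachs G M ∧ s(u, v) ∈ M ∧ deg (fE M) u = 1) =
      Fiber G ({u, v}ᶜ : Set V) {s(u, v)} := by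
  have hES : ∀ e ∈ ({s(u, v)} : Finset (Sym2 V)), ∀ x ∈ e, x ∉ ({u, v}ᶜ : Set V) := by
    intro e he x hx
    rw [Finset.mem_singleton] at he
    subst he
    rcases Sym2.mem_iff.1 hx with rfl | rfl
    · simp
    · simp
  ext M
  rw [Finset.mem_filter, mem_fiber_iff]
  simp only [Finset.mem_univ, true_and]
  constructor
  · rintro ⟨hs, hD, hdu⟩
    have hadjuv : (fE M).Adj u v := fE_adj.2 ⟨hD, h.ne⟩
    have hdv : deg (fE M) v = 1 := hs.2.2 u v hadjuv hdu
    refine ⟨hs, Finset.singleton_subset_iff.2 hD, ?_⟩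
    intro e he hne x hx
    rw [Finset.mem_singleton] at hne
    simp only [Set.mem_compl_iff, Set.mem_insert_iff, Set.mem_singleton_iff]
    push_neg
    constructor
    · rintro rfl
      obtain ⟨z, rfl⟩ := Sym2.mem_iff_exists.1 hx
      have hadj : (fE M).Adj x z := fE_adj_of_mem hs he
      have := deg_one_unique hdu hadj hadjuv
      subst this
      exact hne rfl
    · rintro rfl
      obtain ⟨z, rfl⟩ := Sym2.mem_iff_exists.1 hx
      have hadj : (fE M).Adj x z := fE_adj_of_mem hs he
      have := deg_one_unique hdv hadj hadjuv.symm
      subst this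
      exact hne (Sym2.eq_swap)
  · rintro ⟨hs, hEM, hout⟩
    have hD : s(u, v) ∈ M := hEM (Finset.mem_singleton_self _)
    refine ⟨hs, hD, ?_⟩
    have hsub : ∀ e ∈ M \ {s(u, v)}, ∀ x ∈ e, x ∈ ({u, v}ᶜ : Set V) := by
      intro e he
      rw [Finset.mem_sdiff] at he
      exact hout e he.1 he.2
    have hrt : {s(u, v)} ∪ liftEdges ({u, v}ᶜ : Set V)
        (restrictEdges ({u, v}ᶜ : Set V) (M \ {s(u, v)})) = M := by
      rw [lift_restrict _ hsub, Finset.union_sdiff_of_subset hEM]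
    have hu : u ∉ ({u, v}ᶜ : Set V) := by simp
    calc deg (fE M) u
        = deg (fE ({s(u, v)} ∪ liftEdges ({u, v}ᶜ : Set V)
            (restrictEdges ({u, v}ᶜ : Set V) (M \ {s(u, v)})))) u := by rw [hrt]
      _ = deg (fE {s(u, v)}) u := deg_core hES _ hu
      _ = 1 := deg_single_u h.ne

end Classes

/-! ### Cycle cores -/

section CycCore
variable [Fintype V] {G : SimpleGraph V} {u v : V}

lemma EH_endpoints {H : G.Subgraph} {e : Sym2 V} (he : e ∈ EH H) :
    ∀ x ∈ e, x ∈ H.verts := by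
  intro x hx
  exact Subgraph.mem_verts_of_mem_edge (mem_EH.1 he) hx

lemma hES_EH {H : G.Subgraph} :
    ∀ e ∈ EH H, ∀ x ∈ e, x ∉ ((H.verts)ᶜ : Set V) := by
  intro e he x hx
  rw [Set.notMem_compl_iff]
  exact EH_endpoints he x hx

lemma sachs_EH {H : G.Subgraph} (hH : IsCycleSubgraph H) : Sachs G (EH H) := by
  obtain ⟨hconn, hreg⟩ := (isCycleSubgraph_iff H).1 hH
  have hfe : fE (EH H) = H.spanningCoe := fE_EH H
  have hdeg : ∀ x ∈ H.verts, deg (fE (EH H)) x = 2 := by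
    intro x hx
    rw [hfe, deg_spanningCoe]
    exact hreg x hx
  refine ⟨?_, ?_, ?_⟩
  · intro e he
    exact H.edgeSet_subset (mem_EH.1 he)
  · intro x hx
    rw [hfe, spanningCoe_support_of_cycle hreg] at hx
    exact Or.inr (hdeg x hx)
  · intro x y hxy hdx
    have hx : x ∈ H.verts := by
      rw [hfe] at hxy
      exact (hxy : H.Adj x y).fst_mem
    rw [hdeg x hx] at hdx
    omega

lemma numCyc_EH {H : G.Subgraph} (hH : IsCycleSubgraph H) : numCyc (fE (EH H)) = 1 := by
  obtain ⟨hconn, hreg⟩ := (isCycleSubgraph_iff H).1 hH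
  rw [fE_EH]
  exact numCyc_cycle hconn hreg

/-- class C with component `H` is the fiber of `EH H`. -/
lemma classC_eq_fiber (h : G.Adj u v) {H : G.Subgraph}
    (hH : IsCycleSubgraph H) (huvH : H.Adj u v) :
    univ.filter (fun M : Finset (Sym2 V) =>
        (Sachs G M ∧ s(u, v) ∈ M ∧ deg (fE M) u = 2) ∧ compSub G M u = H) =
      Fiber G ((H.verts)ᶜ : Set V) (EH H) := by
  obtain ⟨hconn, hreg⟩ := (isCycleSubgraph_iff H).1 hH
  have huverts : u ∈ H.verts := huvH.fst_mem
  ext M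
  rw [Finset.mem_filter, mem_fiber_iff]
  simp only [Finset.mem_univ, true_and]
  constructor
  · rintro ⟨⟨hs, hD, hd2⟩, rfl⟩
    refine ⟨hs, ?_, ?_⟩
    · -- EH (compSub) ⊆ M
      intro e he
      have := mem_EH.1 he
      induction e using Sym2.ind with
      | _ a b =>
      rw [Subgraph.mem_edgeSet] at this
      exact mem_of_fE_adj this.2.1
    · -- edges outside the component avoid its vertices
      intro e heM hne x hx
      rw [Set.mem_compl_iff]
      intro hxv
      obtain ⟨z, rfl⟩ := Sym2.mem_iff_exists.1 hx
      have hadj : (fE M).Adj x z := fE_adj_of_mem hs heM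
      have : (compSub G M u).Adj x z := (compSub_adj hs hxv).2 hadj
      exact hne (mem_EH.2 (Subgraph.mem_edgeSet.2 this))
  · rintro ⟨hs, hEM, hout⟩
    have hD : s(u, v) ∈ M := hEM (mem_EH.2 (Subgraph.mem_edgeSet.2 huvH))
    -- decomposition of M
    have hsub : ∀ e ∈ M \ EH H, ∀ x ∈ e, x ∈ ((H.verts)ᶜ : Set V) := by
      intro e he
      rw [Finset.mem_sdiff] at he
      exact hout e he.1 he.2
    have hrt : EH H ∪ liftEdges ((H.verts)ᶜ : Set V)
        (restrictEdges ((H.verts)ᶜ : Set V) (M \ EH H)) = M := by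
      rw [lift_restrict _ hsub, Finset.union_sdiff_of_subset hEM]
    set L := liftEdges ((H.verts)ᶜ : Set V)
        (restrictEdges ((H.verts)ᶜ : Set V) (M \ EH H)) with hL
    have hunotS : u ∉ ((H.verts)ᶜ : Set V) := by
      rw [Set.notMem_compl_iff]; exact huverts
    have hd2 : deg (fE M) u = 2 := by
      calc deg (fE M) u = deg (fE (EH H ∪ L)) u := by rw [hrt]
        _ = deg (fE (EH H)) u := deg_core hES_EH _ hunotS
        _ = 2 := by rw [fE_EH, deg_spanningCoe]; exact hreg u huverts
    refine ⟨⟨hs, hD, hd2⟩, ?_⟩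
    -- identify the component subgraph
    have hfeM : fE M = H.spanningCoe ⊔ fE L := by
      rw [← hrt, fE_union, fE_EH]
    have hdisj : Disjoint H.spanningCoe.support (fE L).support := by
      rw [spanningCoe_support_of_cycle hreg]
      refine Set.disjoint_of_subset (le_refl _) (support_lift_subset _) ?_
      exact disjoint_compl_right
    have husup : u ∈ H.spanningCoe.support := by
      rw [spanningCoe_support_of_cycle hreg]; exact huverts
    have hverts : ∀ x, (fE M).Reachable u x ↔ x ∈ H.verts := by
      intro x
      constructor
      · intro hr
        rw [hfeM] at hr
        have := (reachable_sup_left hdisj husup hr).2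
        rwa [spanningCoe_support_of_cycle hreg] at this
      · intro hx
        rw [hfeM]
        exact Reachable.mono le_sup_left (reachable_spanningCoe_of_verts hconn huverts hx)
    refine Subgraph.ext ?_ ?_
    · ext x
      rw [compSub_verts, hverts]
    · ext a b
      constructor
      · rintro ⟨hG, hM, hra, hrb⟩
        have haV : a ∈ H.verts := (hverts a).1 hra
        have haS : a ∈ H.spanningCoe.support := by
          rwa [spanningCoe_support_of_cycle hreg]
        rw [hfeM] at hM
        exact sup_adj_left hdisj hM haS
      · intro hab
        refine ⟨H.adj_sub hab, ?_, ?_, ?_⟩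
        · rw [hfeM]
          exact (sup_adj _ _ _ _).2 (Or.inl hab)
        · exact (hverts a).2 hab.fst_mem
        · exact (hverts b).2 hab.snd_mem

end CycCore

/-! ### Finiteness of subgraphs -/

instance instFiniteSubgraph [Finite V] {G : SimpleGraph V} : Finite G.Subgraph := by
  refine Finite.of_injective (fun H => (H.verts, H.Adj)) ?_
  rintro H1 H2 heq
  rw [Prod.mk.injEq] at heq
  exact Subgraph.ext heq.1 heq.2

/-! ### The main theorem -/

/-- Edge deletion formula:
`PS(G) = PS(G-uv) + PS(G-u-v) + 2·Σ_{C ∈ 𝒞(uv)} PS(G - V(C))`. -/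
theorem PS_deleteEdge [Fintype V] (G : SimpleGraph V) (u v : V) (h : G.Adj u v) :
    PS G = PS (G.deleteEdges {s(u, v)}) + PS (G.induce ({u, v}ᶜ : Set V)) +
      2 * ∑ᶠ H ∈ {H : G.Subgraph | IsCycleSubgraph H ∧ H.Adj u v},
        PS (G.induce ((H.verts)ᶜ)) := by
  classical
  haveI : Fintype G.Subgraph := Fintype.ofFinite _
  set D := s(u, v) with hD
  set fA := univ.filter (fun M : Finset (Sym2 V) => Sachs G M ∧ D ∉ M) with hfA
  set fB := univ.filter (fun M : Finset (Sym2 V) =>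
    Sachs G M ∧ D ∈ M ∧ deg (fE M) u = 1) with hfB
  set fC := univ.filter (fun M : Finset (Sym2 V) =>
    Sachs G M ∧ D ∈ M ∧ deg (fE M) u = 2) with hfC
  set cycF := univ.filter (fun H : G.Subgraph => IsCycleSubgraph H ∧ H.Adj u v) with hcycF
  -- the split of the Sachs sum
  have hsplit : univ.filter (fun M : Finset (Sym2 V) => Sachs G M) = fA ∪ (fB ∪ fC) := by
    ext M
    simp only [hfA, hfB, hfC, Finset.mem_filter, Finset.mem_union, Finset.mem_univ, true_and]
    constructor
    · intro hs
      by_cases hDM : D ∈ M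
      · have hu : u ∈ (fE M).support := ⟨v, fE_adj.2 ⟨hDM, h.ne⟩⟩
        rcases hs.2.1 u hu with h1 | h2
        · exact Or.inr (Or.inl ⟨hs, hDM, h1⟩)
        · exact Or.inr (Or.inr ⟨hs, hDM, h2⟩)
      · exact Or.inl ⟨hs, hDM⟩
    · rintro (⟨hs, _⟩ | ⟨hs, _, _⟩ | ⟨hs, _, _⟩) <;> exact hs
  have hdisjBC : Disjoint fB fC := by
    rw [Finset.disjoint_left]
    intro M hMB hMC
    rw [hfB, Finset.mem_filter] at hMB
    rw [hfC, Finset.mem_filter] at hMC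
    have h1 := hMB.2.2.2
    have h2 := hMC.2.2.2
    omega
  have hdisjA : Disjoint fA (fB ∪ fC) := by
    rw [Finset.disjoint_left]
    intro M hMA hM
    rw [hfA, Finset.mem_filter] at hMA
    rw [Finset.mem_union, hfB, hfC, Finset.mem_filter, Finset.mem_filter] at hM
    rcases hM with hM | hM <;> exact hMA.2.2 hM.2.2.1
  rw [PS_eq G, hsplit, Finset.sum_union hdisjA, Finset.sum_union hdisjBC]
  -- part A
  have hA : ∑ M ∈ fA, 2 ^ numCyc (fE M) = PS (G.deleteEdges {D}) := by
    rw [PS_eq]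
    refine Finset.sum_congr ?_ (fun _ _ => rfl)
    ext M
    simp only [hfA, Finset.mem_filter, Finset.mem_univ, true_and]
    exact sachs_deleteEdges_iff h M
  -- part B
  have hESB : ∀ e ∈ ({D} : Finset (Sym2 V)), ∀ x ∈ e, x ∉ ({u, v}ᶜ : Set V) := by
    intro e he x hx
    rw [Finset.mem_singleton] at he
    subst he
    rcases Sym2.mem_iff.1 hx with rfl | rfl
    · simp
    · simp
  have hB : ∑ M ∈ fB, 2 ^ numCyc (fE M) = PS (G.induce ({u, v}ᶜ : Set V)) := by
    rw [hfB, classB_eq_fiber h, sum_fiber (sachs_single h.ne h) hESB,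
      numCyc_single h.ne, pow_zero, one_mul]
    exact PS_congr_inst _ _ _
  -- part C
  have hCsplit : fC = cycF.biUnion (fun H => univ.filter (fun M : Finset (Sym2 V) =>
      (Sachs G M ∧ D ∈ M ∧ deg (fE M) u = 2) ∧ compSub G M u = H)) := by
    ext M
    simp only [hfC, hcycF, Finset.mem_filter, Finset.mem_biUnion, Finset.mem_univ, true_and]
    constructor
    · rintro ⟨hs, hDM, hd2⟩
      exact ⟨compSub G M u, ⟨compSub_isCycle hs hd2, compSub_adj_uv h hDM⟩,
        ⟨hs, hDM, hd2⟩, rfl⟩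
    · rintro ⟨H, _, hM, _⟩
      exact hM
  have hdisjH : (↑cycF : Set G.Subgraph).PairwiseDisjoint
      (fun H => univ.filter (fun M : Finset (Sym2 V) =>
        (Sachs G M ∧ D ∈ M ∧ deg (fE M) u = 2) ∧ compSub G M u = H)) := by
    intro H1 _ H2 _ hne
    rw [Function.onFun, Finset.disjoint_left]
    intro M hM1 hM2
    rw [Finset.mem_filter] at hM1 hM2
    exact hne (hM1.2.2 ▸ hM2.2.2)
  have hC : ∑ M ∈ fC, 2 ^ numCyc (fE M) =
      2 * ∑ H ∈ cycF, PS (G.induce ((H.verts)ᶜ)) := by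
    rw [hCsplit, Finset.sum_biUnion hdisjH, Finset.mul_sum]
    refine Finset.sum_congr rfl ?_
    intro H hH
    rw [hcycF, Finset.mem_filter] at hH
    obtain ⟨_, hHc, hHuv⟩ := hH
    rw [classC_eq_fiber h hHc hHuv, sum_fiber (sachs_EH hHc) hES_EH,
      numCyc_EH hHc, pow_one]
    exact congrArg (2 * ·) (PS_congr_inst _ _ _)
  -- finsum conversion
  have hfin : ∑ᶠ H ∈ {H : G.Subgraph | IsCycleSubgraph H ∧ H.Adj u v},
      PS (G.induce ((H.verts)ᶜ)) = ∑ H ∈ cycF, PS (G.induce ((H.verts)ᶜ)) := by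
    have hset : {H : G.Subgraph | IsCycleSubgraph H ∧ H.Adj u v} = ↑cycF := by
      ext H
      simp only [hcycF, Set.mem_setOf_eq, Finset.coe_filter, Finset.mem_univ, true_and]
    rw [hset, finsum_mem_coe_finset]
  rw [hA, hB, hC, hfin]
  ring

end PermSum
end
end
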